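/- arXiv:1710.04079 — 4 statements merged into one kernel-verified Lean document; each statement's English description precedes it below -/
import Mathlib

section
/- Let A be a nonnegative tensor of order m and dimension n, and let y be an eigenvector of A corresponding to an eigenvalue λ with |λ| = ρ(A), where A is weakly irreducible. Then the entrywise absolute value |y| is an eigenvector of A corresponding to ρ(A), and it equals the unique positive eigenvector (Perron vector) of A up to a positive scalar. -/
/-!
Write `A = a` with `a` a nonnegative real tensor and `M = m - 1`. Perron–Frobenius first provides a
positive eigenpair `(ρ, z)` of `a`. For a positive tensor, maximise `t` subject to
`t x^{[M]} ≤ a x^M` over the simplex: a maximiser `z` is an eigenvector, for otherwise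
`u = (a z^M / t)^{1/M} ≥ z` satisfies `a u^M > t u^{[M]}` strictly. For a weakly irreducible `a`,
pass to the limit along eigenpairs of `a + ε`; their normalised eigenvectors stay uniformly
positive, because an arc `i → j` gives `z_j (min z)^{M-1} ≤ C z_i^M`, and a chain of arcs leads from
the smallest coordinate to one that is at least `1 / n`.

The triangle inequality makes `x = |y|` a sub-eigenvector: `|l| x^{[M]} ≤ a x^M`. Compare `x` with
`c z`, where `c = max_i x_i / z_i`. At a coordinate with `x_i = c z_i` the chain
`a x^M ≤ a (c z)^M = ρ (c z_i)^M ≤ a x^M` collapses termwise, which forces `x_j = c z_j` along every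
arc `i → j`, hence everywhere. The same comparison (Collatz–Wielandt) bounds the modulus of every
eigenvalue by `ρ`, so `ρ = ρ(A)`, and `x = c z` is an eigenvector for `ρ(A)`.
-/

open scoped BigOperators

namespace PaperTensor

/-- A tensor of order `m` and dimension `|ι|`: entry `A i f` is `a_{i, f 0, …, f (m-2)}`. -/
abbrev Tensor (ι : Type) (m : ℕ) : Type := ι → (Fin (m - 1) → ι) → ℂ

variable {ι : Type} [Fintype ι] {m : ℕ}

/-- `(A x^{m-1})_i = ∑ a_{i i₂ … i_m} x_{i₂} ⋯ x_{i_m}`. -/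
noncomputable def tApp (A : Tensor ι m) (x : ι → ℂ) (i : ι) : ℂ :=
  ∑ f : Fin (m - 1) → ι, A i f * ∏ j, x (f j)

/-- `x ≠ 0` and `A x^{m-1} = l x^{[m-1]}`. -/
def IsEigPair (A : Tensor ι m) (l : ℂ) (x : ι → ℂ) : Prop :=
  x ≠ 0 ∧ ∀ i, tApp A x i = l * x i ^ (m - 1)

def Eigenvalues (A : Tensor ι m) : Set ℂ := {l | ∃ x, IsEigPair A l x}

/-- The spectral radius: the largest modulus of an eigenvalue. -/
noncomputable def specRad (A : Tensor ι m) : ℝ := sSup ((fun z : ℂ => ‖z‖) '' Eigenvalues A)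

/-- All entries are nonnegative reals. -/
def Nonneg (A : Tensor ι m) : Prop := ∀ i f, ∃ r : ℝ, 0 ≤ r ∧ A i f = (r : ℂ)

/-- Arc `(i,j)` of the directed graph `G(A)`. -/
def Arc (A : Tensor ι m) (i j : ι) : Prop := ∃ f, A i f ≠ 0 ∧ ∃ k, f k = j

/-- `G(A)` is strongly connected. -/
def WeaklyIrreducible (A : Tensor ι m) : Prop :=
  ∀ i j : ι, Relation.ReflTransGen (Arc A) i j

/-- The projective eigenvariety `PV_l(A) ⊆ ℙ^{n-1}`. -/
def PV (A : Tensor ι m) (l : ℂ) : Set (Projectivization ℂ (ι → ℂ)) :=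
  {p | ∃ (v : ι → ℂ) (hv : v ≠ 0), Projectivization.mk ℂ v hv = p ∧
        ∀ i, tApp A v i = l * v i ^ (m - 1)}

/-- `(D^{-(m-1)} A D)_{i₁…i_m} = d_{i₁}^{-(m-1)} a_{i₁…i_m} d_{i₂} ⋯ d_{i_m}`. -/
noncomputable def diagConj (d : ι → ℂ) (A : Tensor ι m) : Tensor ι m :=
  fun i f => (d i)⁻¹ ^ (m - 1) * A i f * ∏ j, d (f j)

/-- Combinatorial symmetry: the support is invariant under permutations of indices. -/
def CombSymm (A : Tensor ι m) : Prop :=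
  ∀ i f i' f', (i ::ₘ Multiset.map f Finset.univ.val) = (i' ::ₘ Multiset.map f' Finset.univ.val) →
    (A i f ≠ 0 ↔ A i' f' ≠ 0)

/-- Irreducibility of a tensor. -/
def Irred (A : Tensor ι m) : Prop :=
  ¬ ∃ S : Set ι, S.Nonempty ∧ S ≠ Set.univ ∧
      ∀ i ∈ S, ∀ f : Fin (m - 1) → ι, (∀ j, f j ∉ S) → A i f = 0

/-- Solid arc: `(i,j)` arising from a nonzero entry `a_{ij…j}`. -/
def SolidArc (A : Tensor ι m) (i j : ι) : Prop := A i (fun _ => j) ≠ 0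

/-- Spectral `ℓ`-symmetry: `Spec(A) = e^{2πi/ℓ} Spec(A)`. -/
def SpectralSymm (A : Tensor ι m) (ℓ : ℕ) : Prop :=
  Eigenvalues A = (fun z => Complex.exp ((2 * Real.pi / ℓ : ℝ) * Complex.I) * z) '' Eigenvalues A

/-- The set `𝔇^{(j)}(A)` (for the given `ℓ`), as diagonal matrices recorded by their diagonals. -/
def Dgj {n m : ℕ} [NeZero n] (A : Tensor (Fin n) m) (ℓ j : ℕ) : Set (Fin n → ℂ) :=
  {d | (∀ i, d i ≠ 0) ∧ d 0 = 1 ∧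
    ∀ i f, A i f = Complex.exp (-(2 * Real.pi * j / ℓ : ℝ) * Complex.I) * diagConj d A i f}

/-- The group `𝔇(A) = ⋃_{j=0}^{ℓ-1} 𝔇^{(j)}(A)`. -/
def DgAll {n m : ℕ} [NeZero n] (A : Tensor (Fin n) m) (ℓ : ℕ) : Set (Fin n → ℂ) :=
  {d | ∃ j < ℓ, d ∈ Dgj A ℓ j}

/-- `𝔇^{(0)}(A)`. -/
def Dg0 {n m : ℕ} [NeZero n] (A : Tensor (Fin n) m) : Set (Fin n → ℂ) :=
  {d | (∀ i, d i ≠ 0) ∧ d 0 = 1 ∧ ∀ i f, A i f = diagConj d A i f}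

/-- Restriction (principal subtensor) of `A` to a set `S` of indices. -/
def restrict (A : Tensor ι m) (S : Set ι) : Tensor S m :=
  fun i f => A i.1 (fun j => (f j).1)


open Finset Filter Topology Relation

section RealTensor

variable {M : ℕ}

/-- The real counterpart of `tApp`, with `M` in the role of `m - 1`. -/
noncomputable def realApp (a : ι → (Fin M → ι) → ℝ) (x : ι → ℝ) (i : ι) : ℝ :=
  ∑ f : Fin M → ι, a i f * ∏ j, x (f j)

def IsSubEigen (a : ι → (Fin M → ι) → ℝ) (t : ℝ) (x : ι → ℝ) : Prop :=
  ∀ i, t * x i ^ M ≤ realApp a x i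

def IsEigen (a : ι → (Fin M → ι) → ℝ) (t : ℝ) (x : ι → ℝ) : Prop :=
  ∀ i, realApp a x i = t * x i ^ M

def RealArc (a : ι → (Fin M → ι) → ℝ) (i j : ι) : Prop := ∃ f, a i f ≠ 0 ∧ ∃ k, f k = j

variable {a b : ι → (Fin M → ι) → ℝ} {x y z : ι → ℝ} {s t : ℝ}

lemma IsEigen.isSubEigen (h : IsEigen a t x) : IsSubEigen a t x := fun i => (h i).ge

lemma realApp_nonneg (ha : 0 ≤ a) (hx : 0 ≤ x) (i : ι) : 0 ≤ realApp a x i :=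
  sum_nonneg fun f _ => mul_nonneg (ha i f) (prod_nonneg fun j _ => hx (f j))

lemma realApp_le_realApp (ha : 0 ≤ a) (hx : 0 ≤ x) (hxy : x ≤ y) (i : ι) :
    realApp a x i ≤ realApp a y i :=
  sum_le_sum fun f _ => mul_le_mul_of_nonneg_left
    (prod_le_prod (fun j _ => hx (f j)) fun j _ => hxy (f j)) (ha i f)

lemma realApp_le_realApp_of_le (hab : a ≤ b) (hx : 0 ≤ x) (i : ι) :
    realApp a x i ≤ realApp b x i :=
  sum_le_sum fun f _ => mul_le_mul_of_nonneg_right (hab i f) (prod_nonneg fun j _ => hx (f j))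

lemma realApp_smul (a : ι → (Fin M → ι) → ℝ) (c : ℝ) (x : ι → ℝ) (i : ι) :
    realApp a (c • x) i = c ^ M * realApp a x i := by
  simp only [realApp, mul_sum, Pi.smul_apply, smul_eq_mul, prod_mul_distrib, prod_const,
    card_univ, Fintype.card_fin]
  exact sum_congr rfl fun f _ => by ring

lemma mul_prod_le_realApp (ha : 0 ≤ a) (hx : 0 ≤ x) (i : ι) (f : Fin M → ι) :
    a i f * ∏ j, x (f j) ≤ realApp a x i :=
  single_le_sum (f := fun g => a i g * ∏ j, x (g j))
    (fun g _ => mul_nonneg (ha i g) (prod_nonneg fun j _ => hx (g j))) (mem_univ f)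

lemma IsSubEigen.smul (h : IsSubEigen a t x) {c : ℝ} (hc : 0 ≤ c) : IsSubEigen a t (c • x) :=
  fun i => by
    rw [realApp_smul, Pi.smul_apply, smul_eq_mul, mul_pow]
    nlinarith [h i, pow_nonneg hc M]

lemma IsEigen.smul (h : IsEigen a t x) (c : ℝ) : IsEigen a t (c • x) := fun i => by
  rw [realApp_smul, h i, Pi.smul_apply, smul_eq_mul, mul_pow]
  ring

lemma IsEigen.nonneg [Nonempty ι] (h : IsEigen a t x) (ha : 0 ≤ a) (hx : ∀ i, 0 < x i) :
    0 ≤ t := by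
  obtain ⟨i⟩ := ‹Nonempty ι›
  have := h i ▸ realApp_nonneg ha (fun j => (hx j).le) i
  exact nonneg_of_mul_nonneg_left this (pow_pos (hx i) M)

lemma exists_pos_le_smul_eq (hz : ∀ i, 0 < z i) (hx : 0 ≤ x) (hx0 : x ≠ 0) :
    ∃ c i₀, 0 < c ∧ x ≤ c • z ∧ x i₀ = c * z i₀ := by
  obtain ⟨j, hj⟩ := Function.ne_iff.1 hx0
  have : Nonempty ι := ⟨j⟩
  obtain ⟨i₀, hi₀⟩ := Finite.exists_max fun i => x i / z i
  refine ⟨x i₀ / z i₀, i₀, ?_, fun i => (div_le_iff₀ (hz i)).1 (hi₀ i),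
    (div_mul_cancel₀ _ (hz i₀).ne').symm⟩
  exact (div_pos ((hx j).lt_of_ne (Ne.symm hj)) (hz j)).trans_le (hi₀ j)

lemma le_of_isSubEigen_of_rowSum_le (ha : 0 ≤ a) (hx : 0 ≤ x) (hx0 : x ≠ 0)
    {R : ℝ} (hR : ∀ i, ∑ f, a i f ≤ R) (h : IsSubEigen a t x) : t ≤ R := by
  obtain ⟨j, hj⟩ := Function.ne_iff.1 hx0
  have : Nonempty ι := ⟨j⟩
  obtain ⟨i, hi⟩ := Finite.exists_max x
  have hxi : 0 < x i := (lt_of_le_of_ne (hx j) (Ne.symm hj)).trans_le (hi j)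
  have hbound : realApp a x i ≤ R * x i ^ M := calc
    realApp a x i ≤ ∑ f, a i f * x i ^ M := sum_le_sum fun f _ =>
        mul_le_mul_of_nonneg_left (by
          simpa using prod_le_prod (s := univ) (fun k _ => hx (f k)) fun k _ => hi (f k)) (ha i f)
    _ = (∑ f, a i f) * x i ^ M := (sum_mul ..).symm
    _ ≤ R * x i ^ M := mul_le_mul_of_nonneg_right (hR i) (pow_nonneg hxi.le M)
  exact le_of_mul_le_mul_right ((h i).trans hbound) (pow_pos hxi M)

lemma IsEigen.realApp_smul_eq (hzt : IsEigen a t z) {c : ℝ} {i : ι} (hxi : x i = c * z i) :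
    realApp a (c • z) i = t * x i ^ M := by
  rw [realApp_smul, hzt i, hxi, mul_pow]
  ring

lemma le_of_isSubEigen_of_isEigen (ha : 0 ≤ a) (hz : ∀ i, 0 < z i)
    (hzt : IsEigen a t z) (hx : 0 ≤ x) (hx0 : x ≠ 0) (h : IsSubEigen a s x) : s ≤ t := by
  obtain ⟨c, i, hc, hxc, hxi⟩ := exists_pos_le_smul_eq hz hx hx0
  have hxi_pos : 0 < x i := hxi ▸ mul_pos hc (hz i)
  exact le_of_mul_le_mul_right
    ((h i).trans ((realApp_le_realApp ha hx hxc i).trans_eq (hzt.realApp_smul_eq hxi)))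
    (pow_pos hxi_pos M)

lemma eq_of_prod_eq_prod {α : Type*} {s : Finset α} {f g : α → ℝ} (hf : ∀ i ∈ s, 0 ≤ f i)
    (hfg : ∀ i ∈ s, f i ≤ g i) (hg : 0 < ∏ i ∈ s, g i) (h : ∏ i ∈ s, f i = ∏ i ∈ s, g i) :
    ∀ i ∈ s, f i = g i := by
  have hf_pos : ∀ i ∈ s, 0 < f i := fun i hi => (hf i hi).lt_of_ne fun hfi =>
    hg.ne' (h ▸ prod_eq_zero hi hfi.symm)
  by_contra! hne
  obtain ⟨i, hi, hfgi⟩ := hne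
  exact (prod_lt_prod hf_pos hfg ⟨i, hi, (hfg i hi).lt_of_ne hfgi⟩).ne h

lemma eq_of_realApp_eq (ha : 0 ≤ a) (hx : 0 ≤ x) (hxy : x ≤ y) (hy : ∀ i, 0 < y i) {i : ι}
    (h : realApp a x i = realApp a y i) {f : Fin M → ι} (hf : a i f ≠ 0) (k : Fin M) :
    x (f k) = y (f k) := by
  have hterm := (sum_eq_sum_iff_of_le fun g _ => mul_le_mul_of_nonneg_left
    (prod_le_prod (fun k _ => hx (g k)) fun k _ => hxy (g k)) (ha i g)).1 h f (mem_univ f)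
  exact eq_of_prod_eq_prod (fun k _ => hx (f k)) (fun k _ => hxy (f k))
    (prod_pos fun k _ => hy (f k)) (mul_left_cancel₀ hf hterm) k (mem_univ k)

lemma eq_smul_of_isSubEigen_of_isEigen (ha : 0 ≤ a)
    (hwi : ∀ i j, ReflTransGen (RealArc a) i j) (hz : ∀ i, 0 < z i) (hzt : IsEigen a t z)
    (hx : 0 ≤ x) (hx0 : x ≠ 0) (h : IsSubEigen a t x) : ∃ c : ℝ, 0 < c ∧ x = c • z := by
  obtain ⟨c, i₀, hc, hxc, hxi₀⟩ := exists_pos_le_smul_eq hz hx hx0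
  have hcz : ∀ i, 0 < (c • z) i := fun i => mul_pos hc (hz i)
  have hstep : ∀ i j, x i = c * z i → RealArc a i j → x j = c * z j := by
    rintro i _ hxi ⟨f, hf, k, rfl⟩
    have hsum : realApp a x i = realApp a (c • z) i :=
      (realApp_le_realApp ha hx hxc i).antisymm ((hzt.realApp_smul_eq hxi).trans_le (h i))
    exact eq_of_realApp_eq ha hx hxc hcz hsum hf k
  refine ⟨c, hc, funext fun j => ?_⟩
  induction hwi i₀ j with
  | refl => exact hxi₀
  | tail _ hbc ih => exact hstep _ _ ih hbc

lemma exists_gt_forall_mul_le {w y : ι → ℝ} (h : ∀ i, s * w i < y i) :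
    ∃ t > s, ∀ i, t * w i ≤ y i := by
  have hnhds : ∀ᶠ t in 𝓝 s, ∀ i, t * w i < y i := eventually_all.2 fun i =>
    (continuous_mul_const (w i)).continuousAt.eventually_lt continuousAt_const (h i)
  obtain ⟨t, ht, hts⟩ := ((hnhds.filter_mono nhdsWithin_le_nhds).and
    (self_mem_nhdsWithin (s := Set.Ioi s))).exists
  exact ⟨t, hts, fun i => (ht i).le⟩

lemma inv_sum_smul_mem_stdSimplex (hx : 0 ≤ x) (hx0 : x ≠ 0) :
    (∑ i, x i)⁻¹ • x ∈ stdSimplex ℝ ι := by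
  obtain ⟨j, hj⟩ := Function.ne_iff.1 hx0
  have hsum : 0 < ∑ i, x i :=
    sum_pos' (fun i _ => hx i) ⟨j, mem_univ j, (hx j).lt_of_ne (Ne.symm hj)⟩
  refine ⟨fun i => mul_nonneg (inv_nonneg.2 hsum.le) (hx i), ?_⟩
  simp only [Pi.smul_apply, smul_eq_mul, ← mul_sum, inv_mul_cancel₀ hsum.ne']

lemma ne_zero_of_mem_stdSimplex (hx : x ∈ stdSimplex ℝ ι) : x ≠ 0 := by
  rintro rfl
  simpa using hx.2

lemma exists_isSubEigen_forall_le [Nonempty ι] (ha : 0 ≤ a) :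
    ∃ t z, z ∈ stdSimplex ℝ ι ∧ IsSubEigen a t z ∧
      ∀ s x, 0 ≤ x → x ≠ 0 → IsSubEigen a s x → s ≤ t := by
  classical
  obtain ⟨R, hR⟩ := Finite.exists_le fun i => ∑ f, a i f
  set K := {p : ℝ × (ι → ℝ) | 0 ≤ p.1 ∧ p.2 ∈ stdSimplex ℝ ι ∧ IsSubEigen a p.1 p.2}
  have hK_closed : IsClosed K := by
    simp only [K, IsSubEigen, Set.ofPred_and, Set.ofPred_forall]
    refine (isClosed_le continuous_const continuous_fst).inter
      (((isClosed_stdSimplex ℝ ι).preimage continuous_snd).inter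
        (isClosed_iInter fun i => isClosed_le (by fun_prop) ?_))
    unfold realApp
    fun_prop
  have hK : IsCompact K := (isCompact_Icc.prod (isCompact_stdSimplex ℝ ι)).of_isClosed_subset
    hK_closed fun p hp => ⟨⟨hp.1, le_of_isSubEigen_of_rowSum_le ha hp.2.1.1
      (ne_zero_of_mem_stdSimplex hp.2.1) hR hp.2.2⟩, hp.2.1⟩
  obtain ⟨i⟩ := ‹Nonempty ι›
  have hK_ne : K.Nonempty := ⟨(0, Pi.single i 1), le_rfl, single_mem_stdSimplex ℝ i,
    fun j => by simpa using realApp_nonneg ha (single_mem_stdSimplex ℝ i).1 j⟩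
  obtain ⟨⟨t, z⟩, ⟨ht, hz, hzt⟩, hmax⟩ := hK.exists_isMaxOn hK_ne continuous_fst.continuousOn
  refine ⟨t, z, hz, hzt, fun s x hx hx0 hsx => ?_⟩
  rcases lt_or_ge s 0 with hs | hs
  · exact hs.le.trans ht
  · exact hmax (a := (s, (∑ i, x i)⁻¹ • x)) ⟨hs, inv_sum_smul_mem_stdSimplex hx hx0,
      hsx.smul (inv_nonneg.2 (sum_nonneg fun i _ => hx i))⟩

lemma realApp_lt_realApp (hM : M ≠ 0) (ha : ∀ i f, 0 < a i f) (hx : 0 ≤ x) (hxy : x ≤ y)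
    (hne : x ≠ y) (i : ι) : realApp a x i < realApp a y i := by
  obtain ⟨j, hj⟩ := Function.ne_iff.1 hne
  refine sum_lt_sum (fun f _ => mul_le_mul_of_nonneg_left
    (prod_le_prod (fun k _ => hx (f k)) fun k _ => hxy (f k)) (ha i f).le)
    ⟨fun _ => j, mem_univ _, mul_lt_mul_of_pos_left ?_ (ha i _)⟩
  simpa using pow_lt_pow_left₀ ((hxy j).lt_of_ne hj) (hx j) hM

lemma exists_isEigen_of_pos [Nonempty ι] (hM : M ≠ 0) (ha : ∀ i f, 0 < a i f) :
    ∃ t z, z ∈ stdSimplex ℝ ι ∧ (∀ i, 0 < z i) ∧ IsEigen a t z := by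
  obtain ⟨t, z, hzS, hzt, hmax⟩ := exists_isSubEigen_forall_le fun i f => (ha i f).le
  have hz : 0 ≤ z := hzS.1
  have hz0 : z ≠ 0 := ne_zero_of_mem_stdSimplex hzS
  have hpos : ∀ i, 0 < realApp a z i := fun i => by
    simpa [realApp, zero_pow hM] using realApp_lt_realApp hM ha le_rfl hz hz0.symm i
  have ht : 0 < t := by
    obtain ⟨s, hs, hsz⟩ := exists_gt_forall_mul_le (s := 0) (w := fun i => z i ^ M)
      fun i => by simpa using hpos i
    exact hs.trans_le (hmax s z hz hz0 hsz)
  have hzt_eq : IsEigen a t z := by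
    by_contra hne
    obtain ⟨i₂, hi₂⟩ := not_forall.1 hne
    set u : ι → ℝ := fun i => (realApp a z i / t) ^ (M⁻¹ : ℝ)
    have hu : 0 ≤ u := fun i => Real.rpow_nonneg (div_pos (hpos i) ht).le _
    have hu_pow : ∀ i, t * u i ^ M = realApp a z i := fun i => by
      rw [Real.rpow_inv_natCast_pow (div_pos (hpos i) ht).le hM, mul_div_cancel₀ _ ht.ne']
    have hzu : z ≤ u := fun i => (pow_le_pow_iff_left₀ (hz i) (hu i) hM).1
      (le_of_mul_le_mul_left ((hzt i).trans (hu_pow i).ge) ht)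
    have hzu_ne : z ≠ u := fun h => by
      have := hu_pow i₂
      rw [← h] at this
      exact hi₂ this.symm
    obtain ⟨s, hs, hsu⟩ := exists_gt_forall_mul_le (s := t) (w := fun i => u i ^ M)
      fun i => (hu_pow i).trans_lt (realApp_lt_realApp hM ha hz hzu hzu_ne i)
    exact (hmax s u hu (fun h => hz0 (le_antisymm (h ▸ hzu) hz)) hsu).not_gt hs
  refine ⟨t, z, hzS, fun i => (hzS.1 i).lt_of_ne' fun hzi => ?_, hzt_eq⟩
  have := (hpos i).trans_eq (hzt_eq i)
  rw [hzi, zero_pow hM, mul_zero] at this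
  exact this.false

lemma exists_le_mul_of_reflTransGen {α : Type*} (hM : M ≠ 0) {r : α → α → Prop} {C : ℝ}
    (hC : 0 ≤ C) {i j : α} (h : ReflTransGen r i j) :
    ∃ K, ∀ (w : α → ℝ) (μ : ℝ), 0 < μ → 0 ≤ w →
      (∀ i' j', r i' j' → w j' * μ ^ (M - 1) ≤ C * w i' ^ M) → w i ≤ μ → w j ≤ K * μ := by
  induction h with
  | refl => exact ⟨1, fun w μ _ _ _ hwi => by rwa [one_mul]⟩
  | @tail b c _ hbc ih =>
    obtain ⟨K, hK⟩ := ih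
    refine ⟨C * K ^ M, fun w μ hμ hw hr hwi => le_of_mul_le_mul_right ?_ (pow_pos hμ (M - 1))⟩
    calc w c * μ ^ (M - 1) ≤ C * w b ^ M := hr b c hbc
      _ ≤ C * (K * μ) ^ M :=
        mul_le_mul_of_nonneg_left (pow_le_pow_left₀ (hw b) (hK w μ hμ hw hr hwi) M) hC
      _ = C * K ^ M * μ * μ ^ (M - 1) := by
        rw [mul_pow, mul_assoc, mul_assoc, ← pow_succ',
          Nat.sub_add_cancel (Nat.one_le_iff_ne_zero.2 hM)]

lemma mul_pow_pred_le_prod {α : Type*} {z : α → ℝ} {μ : ℝ} (hμ : 0 ≤ μ) (hz : ∀ i, μ ≤ z i)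
    (f : Fin M → α) (k : Fin M) :
    z (f k) * μ ^ (M - 1) ≤ ∏ j, z (f j) := by
  rw [← mul_prod_erase univ (fun j => z (f j)) (mem_univ k)]
  refine mul_le_mul_of_nonneg_left ?_ (hμ.trans (hz _))
  calc μ ^ (M - 1) = ∏ _j ∈ univ.erase k, μ := by simp [card_erase_of_mem (mem_univ k)]
    _ ≤ ∏ j ∈ univ.erase k, z (f j) := prod_le_prod (fun _ _ => hμ) fun j _ => hz (f j)

lemma IsEigen.mul_mul_pow_pred_le (hzt : IsEigen b t z) (ha : 0 ≤ a) (hab : a ≤ b) (hz : 0 ≤ z)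
    {μ : ℝ} (hμ : 0 ≤ μ) (hμz : ∀ i, μ ≤ z i) (i : ι) (f : Fin M → ι) (k : Fin M) :
    a i f * (z (f k) * μ ^ (M - 1)) ≤ t * z i ^ M := calc
  _ ≤ a i f * ∏ j, z (f j) := mul_le_mul_of_nonneg_left (mul_pow_pred_le_prod hμ hμz f k) (ha i f)
  _ ≤ realApp a z i := mul_prod_le_realApp ha hz i f
  _ ≤ realApp b z i := realApp_le_realApp_of_le hab hz i
  _ = t * z i ^ M := hzt i

lemma exists_forall_le_of_isEigen [Nonempty ι] (hM : M ≠ 0) (ha : 0 ≤ a)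
    (hwi : ∀ i j, ReflTransGen (RealArc a) i j) {R : ℝ} (hR : 0 ≤ R) :
    ∃ δ > 0, ∀ b t z, a ≤ b → t ≤ R → z ∈ stdSimplex ℝ ι → (∀ i, 0 < z i) → IsEigen b t z →
      ∀ i, δ ≤ z i := by
  -- entries `a i f = 0` contribute `R / 0 = 0` to `C`
  set C := ∑ i, ∑ f, R / a i f
  have hC_nonneg : ∀ i f, 0 ≤ R / a i f := fun i f => div_nonneg hR (ha i f)
  have hC : 0 ≤ C := sum_nonneg fun i _ => sum_nonneg fun f _ => hC_nonneg i f
  have hC_le : ∀ i f, R / a i f ≤ C := fun i f =>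
    (single_le_sum (fun g _ => hC_nonneg i g) (mem_univ f)).trans
      (single_le_sum (f := fun i => ∑ f, R / a i f)
        (fun i _ => sum_nonneg fun g _ => hC_nonneg i g) (mem_univ i))
  choose K hK using fun i j => exists_le_mul_of_reflTransGen hM hC (hwi i j)
  obtain ⟨B, hB⟩ := Finite.exists_le fun p : ι × ι => K p.1 p.2
  have hcard : (0 : ℝ) < Fintype.card ι := Nat.cast_pos.2 Fintype.card_pos
  refine ⟨(Fintype.card ι * max B 1)⁻¹, by positivity,
    fun b t z hab ht hzS hz hzt i => ?_⟩
  obtain ⟨i₀, hi₀⟩ := Finite.exists_min z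
  obtain ⟨j, -, hj⟩ := exists_le_of_sum_le univ_nonempty (f := fun _ => (Fintype.card ι : ℝ)⁻¹)
    (g := z) (by simp [hzS.2, hcard.ne'])
  have harc : ∀ i' j', RealArc a i' j' → z j' * z i₀ ^ (M - 1) ≤ C * z i' ^ M := by
    rintro i' _ ⟨f, hf, k, rfl⟩
    have haf : 0 < a i' f := (ha i' f).lt_of_ne (Ne.symm hf)
    calc z (f k) * z i₀ ^ (M - 1) ≤ R / a i' f * z i' ^ M := by
          rw [div_mul_eq_mul_div, le_div_iff₀ haf, mul_comm]
          exact (hzt.mul_mul_pow_pred_le ha hab (fun j => (hz j).le) (hz i₀).le hi₀ i' f k).trans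
            (mul_le_mul_of_nonneg_right ht (pow_nonneg (hz i').le M))
      _ ≤ C * z i' ^ M := mul_le_mul_of_nonneg_right (hC_le i' f) (pow_nonneg (hz i').le M)
  have hzj : z j ≤ max B 1 * z i₀ :=
    (hK i₀ j z (z i₀) (hz i₀) (fun i => (hz i).le) harc le_rfl).trans
    (mul_le_mul_of_nonneg_right ((hB (i₀, j)).trans (le_max_left _ _)) (hz i₀).le)
  calc (Fintype.card ι * max B 1)⁻¹ = (Fintype.card ι : ℝ)⁻¹ / max B 1 := by
        rw [mul_inv, div_eq_mul_inv]
    _ ≤ z i₀ := by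
        rw [div_le_iff₀ (lt_max_of_lt_right one_pos), mul_comm]
        exact hj.trans hzj
    _ ≤ z i := hi₀ i

lemma isClosed_setOf_isEigen :
    IsClosed {p : (ι → (Fin M → ι) → ℝ) × ℝ × (ι → ℝ) | IsEigen p.1 p.2.1 p.2.2} := by
  simp only [IsEigen, Set.ofPred_forall]
  exact isClosed_iInter fun i => isClosed_eq (by unfold realApp; fun_prop) (by fun_prop)

theorem exists_isEigen_of_reflTransGen [Nonempty ι] (hM : M ≠ 0) (ha : 0 ≤ a)
    (hwi : ∀ i j, ReflTransGen (RealArc a) i j) : ∃ t z, (∀ i, 0 < z i) ∧ IsEigen a t z := by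
  set ε : ℕ → ℝ := fun k => 1 / ((k : ℝ) + 1)
  have hε : ∀ k, 0 < ε k := fun k => Nat.one_div_pos_of_nat
  have hε_le : ∀ k, ε k ≤ 1 := fun k => div_le_one_of_le₀ (by simp) (by positivity)
  set b : ℕ → ι → (Fin M → ι) → ℝ := fun k => a + ε k • 1
  have hb : ∀ k i f, 0 < b k i f := fun k i f => by
    simpa [b] using add_pos_of_nonneg_of_pos (ha i f) (hε k)
  have hb0 : ∀ k, 0 ≤ b k := fun k i f => (hb k i f).le
  have hab : ∀ k, a ≤ b k := fun k i f => by simpa [b] using (hε k).le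
  have hb_le : ∀ k, b k ≤ a + 1 := fun k i f => by simpa [b] using hε_le k
  choose t z hzS hz hzt using fun k => exists_isEigen_of_pos hM (hb k)
  obtain ⟨R, hR⟩ := Finite.exists_le fun i => ∑ f, (a + 1) i f
  have ht : ∀ k, t k ∈ Set.Icc 0 R := fun k =>
    ⟨(hzt k).nonneg (hb0 k) (hz k), le_of_isSubEigen_of_rowSum_le (hb0 k) (hzS k).1
      (ne_zero_of_mem_stdSimplex (hzS k))
      (fun i => (sum_le_sum fun f _ => hb_le k i f).trans (hR i)) (hzt k).isSubEigen⟩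
  obtain ⟨δ, hδ, hδz⟩ := exists_forall_le_of_isEigen hM ha hwi ((ht 0).1.trans (ht 0).2)
  obtain ⟨⟨t₀, z₀⟩, -, φ, hφ, hlim⟩ :=
    (isCompact_Icc.prod (isCompact_stdSimplex ℝ ι)).tendsto_subseq
    fun k => (⟨ht k, hzS k⟩ : (t k, z k) ∈ Set.Icc 0 R ×ˢ stdSimplex ℝ ι)
  have hb_lim : Tendsto (fun k => b (φ k)) atTop (𝓝 a) := by
    simpa [b, ε] using (tendsto_const_nhds (x := a)).add
      (((tendsto_one_div_add_atTop_nhds_zero_nat (𝕜 := ℝ)).comp hφ.tendsto_atTop).smul_const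
        (1 : ι → (Fin M → ι) → ℝ))
  have hz_lim : ∀ i, Tendsto (fun k => z (φ k) i) atTop (𝓝 (z₀ i)) := fun i =>
    ((continuous_apply i).tendsto _).comp ((continuous_snd.tendsto _).comp hlim)
  refine ⟨t₀, z₀, fun i => hδ.trans_le (ge_of_tendsto' (hz_lim i) fun k =>
    hδz _ _ _ (hab _) (ht _).2 (hzS _) (hz _) (hzt _) i), ?_⟩
  exact isClosed_setOf_isEigen.mem_of_tendsto (hb_lim.prodMk_nhds hlim)
    (Eventually.of_forall fun k => hzt (φ k))

end RealTensor

section ComplexTensor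

variable {a : ι → (Fin (m - 1) → ι) → ℝ} {A : Tensor ι m}

lemma tApp_ofReal (hA : ∀ i f, A i f = a i f) (x : ι → ℝ) (i : ι) :
    tApp A (fun j => (x j : ℂ)) i = realApp a x i := by
  simp only [tApp, realApp, hA, Complex.ofReal_sum, Complex.ofReal_mul, Complex.ofReal_prod]

lemma isEigPair_ofReal_iff (hA : ∀ i f, A i f = a i f) {t : ℝ} {x : ι → ℝ} :
    IsEigPair A t (fun j => (x j : ℂ)) ↔ x ≠ 0 ∧ IsEigen a t x := by
  refine and_congr (not_congr ?_) (forall_congr' fun i => ?_)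
  · simp [funext_iff]
  · simp only [tApp_ofReal hA]
    norm_cast

lemma norm_tApp_le (ha : 0 ≤ a) (hA : ∀ i f, A i f = a i f) (w : ι → ℂ) (i : ι) :
    ‖tApp A w i‖ ≤ realApp a (fun j => ‖w j‖) i :=
  (norm_sum_le _ _).trans_eq <| sum_congr rfl fun f _ => by
    rw [norm_mul, norm_prod, hA, Complex.norm_real, Real.norm_of_nonneg (ha i f)]

lemma IsEigPair.isSubEigen_norm (ha : 0 ≤ a) (hA : ∀ i f, A i f = a i f) {l : ℂ} {w : ι → ℂ}
    (h : IsEigPair A l w) : IsSubEigen a ‖l‖ (fun j => ‖w j‖) := fun i => by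
  simpa only [h.2 i, norm_mul, norm_pow] using norm_tApp_le ha hA w i

lemma IsEigPair.norm_ne_zero {l : ℂ} {w : ι → ℂ} (h : IsEigPair A l w) : (fun i => ‖w i‖) ≠ 0 :=
  fun h0 => h.1 (funext fun i => norm_eq_zero.1 (congrFun h0 i))

lemma specRad_eq [Nonempty ι] (ha : 0 ≤ a) (hA : ∀ i f, A i f = a i f) {t : ℝ} {z : ι → ℝ}
    (hz : ∀ i, 0 < z i) (hzt : IsEigen a t z) : specRad A = t := by
  refine IsGreatest.csSup_eq ⟨⟨t, ⟨_, (isEigPair_ofReal_iff hA).2 ⟨?_, hzt⟩⟩, ?_⟩, ?_⟩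
  · obtain ⟨i⟩ := ‹Nonempty ι›
    exact fun h => (hz i).ne' (congrFun h i)
  · simp [hzt.nonneg ha hz]
  · rintro _ ⟨l, ⟨w, hw⟩, rfl⟩
    exact le_of_isSubEigen_of_isEigen ha hz hzt (fun i => norm_nonneg _) hw.norm_ne_zero
      (hw.isSubEigen_norm ha hA)

end ComplexTensor

theorem stmt3_general {n m : ℕ} (hm : 2 ≤ m) (A : Tensor (Fin n) m)
    (hA : Nonneg A) (hwi : WeaklyIrreducible A)
    (l : ℂ) (y : Fin n → ℂ) (hy : IsEigPair A l y) (hl : ‖l‖ = specRad A) :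
    IsEigPair A ((specRad A : ℝ) : ℂ) (fun i => ((‖y i‖ : ℝ) : ℂ)) ∧
    ∀ z : Fin n → ℝ, (∀ i, 0 < z i) →
      IsEigPair A ((specRad A : ℝ) : ℂ) (fun i => (z i : ℂ)) →
      ∃ c : ℝ, 0 < c ∧ ∀ i, ‖y i‖ = c * z i := by
  choose a ha haA using hA
  have hwi' : ∀ i j, ReflTransGen (RealArc a) i j := fun i j => ReflTransGen.mono
    (fun _ _ ⟨f, hf, hfj⟩ => ⟨f, fun h => hf (by simp [haA, h]), hfj⟩) i j (hwi i j)
  obtain ⟨i, -⟩ := Function.ne_iff.1 hy.1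
  have : Nonempty (Fin n) := ⟨i⟩
  obtain ⟨ρ, z₀, hz₀, hρ⟩ := exists_isEigen_of_reflTransGen (by omega) ha hwi'
  rw [specRad_eq ha haA hz₀ hρ] at hl ⊢
  have hsub : IsSubEigen a ρ fun i => ‖y i‖ := hl ▸ hy.isSubEigen_norm ha haA
  have hrigid : ∀ z : Fin n → ℝ, (∀ i, 0 < z i) → IsEigen a ρ z →
      ∃ c : ℝ, 0 < c ∧ (fun i => ‖y i‖) = c • z := fun z hz hzρ =>
    eq_smul_of_isSubEigen_of_isEigen ha hwi' hz hzρ (fun i => norm_nonneg (y i))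
      hy.norm_ne_zero hsub
  obtain ⟨c, -, hc⟩ := hrigid z₀ hz₀ hρ
  refine ⟨(isEigPair_ofReal_iff haA).2 ⟨hy.norm_ne_zero, hc ▸ hρ.smul c⟩, fun z hz hzρ => ?_⟩
  obtain ⟨c', hc', hyz⟩ := hrigid z hz ((isEigPair_ofReal_iff haA).1 hzρ).2
  exact ⟨c', hc', congrFun hyz⟩

/-- If `A` is nonnegative weakly irreducible and `y` is an eigenvector for an eigenvalue of
modulus `ρ(A)`, then `|y|` is an eigenvector for `ρ(A)` and equals the unique positive
eigenvector up to a positive scalar. -/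
theorem stmt3 {n m : ℕ} (hm : 2 ≤ m) (hn : 1 ≤ n) (A : Tensor (Fin n) m)
    (hA : Nonneg A) (hwi : WeaklyIrreducible A)
    (l : ℂ) (y : Fin n → ℂ) (hy : IsEigPair A l y) (hl : ‖l‖ = specRad A) :
    IsEigPair A ((specRad A : ℝ) : ℂ) (fun i => ((‖y i‖ : ℝ) : ℂ)) ∧
    ∀ z : Fin n → ℝ, (∀ i, 0 < z i) →
      IsEigPair A ((specRad A : ℝ) : ℂ) (fun i => (z i : ℂ)) →
      ∃ c : ℝ, 0 < c ∧ ∀ i, ‖y i‖ = c * z i :=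
  stmt3_general hm A hA hwi l y hy hl

end PaperTensor
end

section
/- Two diagonal similar tensors have the same characteristic polynomial and hence the same spectrum. That is, if A is a tensor of order m and dimension n, and D is an invertible diagonal n×n matrix, then A and D^{-(m-1)} A D have the same spectrum. -/
open scoped BigOperators

namespace PaperTensor

variable {ι : Type} [Fintype ι] {m : ℕ}

omit [Fintype ι] in
lemma diagConj_mul (d e : ι → ℂ) (A : Tensor ι m) :
    diagConj d (diagConj e A) = diagConj (d * e) A := by
  funext i f
  simp only [diagConj, Pi.mul_apply, mul_inv, mul_pow, Finset.prod_mul_distrib]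
  ring

omit [Fintype ι] in
lemma diagConj_one (A : Tensor ι m) : diagConj 1 A = A := by
  funext i f
  simp [diagConj]

omit [Fintype ι] in
lemma diagConj_inv_diagConj {d : ι → ℂ} (hd : ∀ i, d i ≠ 0) (A : Tensor ι m) :
    diagConj d⁻¹ (diagConj d A) = A := by
  rw [diagConj_mul, show d⁻¹ * d = 1 from funext fun i => inv_mul_cancel₀ (hd i), diagConj_one]

lemma tApp_diagConj (d : ι → ℂ) (A : Tensor ι m) (x : ι → ℂ) (i : ι) :
    tApp (diagConj d A) x i = (d i)⁻¹ ^ (m - 1) * tApp A (d * x) i := by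
  simp only [tApp, diagConj, Finset.mul_sum, Pi.mul_apply, Finset.prod_mul_distrib]
  exact Finset.sum_congr rfl fun f _ => by ring

lemma IsEigPair.of_diagConj {d : ι → ℂ} (hd : ∀ i, d i ≠ 0) {A : Tensor ι m} {l : ℂ}
    {x : ι → ℂ} (h : IsEigPair (diagConj d A) l x) : IsEigPair A l (d * x) := by
  obtain ⟨hx, heq⟩ := h
  refine ⟨fun hdx => hx (funext fun i => ?_), fun i => ?_⟩
  · exact (mul_eq_zero.mp (congrFun hdx i)).resolve_left (hd i)
  · have hi := heq i
    rw [tApp_diagConj, inv_pow, inv_mul_eq_iff_eq_mul₀ (pow_ne_zero _ (hd i))] at hi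
    rw [hi, Pi.mul_apply, mul_pow]
    ring

lemma eigenvalues_diagConj_subset {d : ι → ℂ} (hd : ∀ i, d i ≠ 0) (A : Tensor ι m) :
    Eigenvalues (diagConj d A) ⊆ Eigenvalues A :=
  fun _ ⟨_, h⟩ => ⟨_, h.of_diagConj hd⟩

theorem stmt5_general {n m : ℕ} (A : Tensor (Fin n) m)
    (d : Fin n → ℂ) (hd : ∀ i, d i ≠ 0) :
    Eigenvalues (diagConj d A) = Eigenvalues A := by
  refine (eigenvalues_diagConj_subset hd A).antisymm ?_
  conv_lhs => rw [← diagConj_inv_diagConj hd A]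
  exact eigenvalues_diagConj_subset (fun i => inv_ne_zero (hd i)) _

/-- Diagonal similar tensors have the same spectrum. -/
theorem stmt5 {n m : ℕ} (hm : 2 ≤ m) (A : Tensor (Fin n) m)
    (d : Fin n → ℂ) (hd : ∀ i, d i ≠ 0) :
    Eigenvalues (diagConj d A) = Eigenvalues A :=
  stmt5_general A d hd

end PaperTensor
end

section
/- Let A be a nonnegative weakly irreducible tensor of order m and dimension n that is spectral ℓ-symmetric, with eigenvalues λ_j = ρ(A) e^{2πij/ℓ}. Then for each j = 0, 1, …, ℓ−1, the map x ↦ D_x = diag(x₁/|x₁|, …, x_n/|x_n|) is a bijection between the set of eigenvectors in PV_{λ_j}(A) normalized so that x₁ = 1 and the set 𝔇^{(j)}(A). -/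
/-!
For a tensor `b` with positive entries, a maximiser over the simplex of the Collatz–Wielandt
function `y ↦ minᵢ (b y^q)ᵢ / yᵢ^q`, evaluated after one power-iteration step, is a positive
eigenvector: otherwise another step would increase the function strictly. A weakly irreducible
nonnegative `a` is the limit of `a + ε`; along the paths of its graph the entries of the normalised
Perron vectors of `a + ε` stay uniformly bounded below, so a limit point is a positive eigenvector
`u` of `a` for some `ρ ≥ 0`.

If a nonnegative `y` satisfies `ρ y^{[q]} ≤ a y^q`, compare it with the least multiple `t u` lying
above it: the set where they agree is closed under arcs, so `y = t u`. For an eigenvector `x` with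
`|λ| = ρ` the triangle inequality makes `|x|` such a `y`; this gives `ρ(A) = ρ` and `|x| = t u`.
Writing `x = D |x|`, the eigen-equation then says that a positive combination of the unit numbers
`∏ₖ d_{f k}` equals its total weight times `(λ/ρ) dᵢ^{m-1}`, so each of them equals
`e^{2πij/ℓ} dᵢ^{m-1}`: this is `D ∈ 𝔇^{(j)}(A)`. Conversely, every such `D` makes `D u` an
eigenvector for `λ_j`.
-/

open scoped BigOperators

namespace PaperTensor

variable {ι : Type} [Fintype ι] {m : ℕ}

open Finset

section HomEval

variable {q : ℕ}

/-- `tApp A x` is `homEval A x` with `q = m - 1`. -/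
def homEval {R : Type*} [CommSemiring R] (a : ι → (Fin q → ι) → R) (x : ι → R) (i : ι) : R :=
  ∑ f, a i f * ∏ k, x (f k)

def EigenEq {R : Type*} [CommSemiring R] (a : ι → (Fin q → ι) → R) (l : R) (x : ι → R) : Prop :=
  ∀ i, homEval a x i = l * x i ^ q

def SuppArc {R : Type*} [Zero R] (a : ι → (Fin q → ι) → R) (i j : ι) : Prop :=
  ∃ f, a i f ≠ 0 ∧ ∃ k, f k = j

lemma homEval_smul {R : Type*} [CommSemiring R] (a : ι → (Fin q → ι) → R) (c : R) (x : ι → R)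
    (i : ι) : homEval a (c • x) i = c ^ q * homEval a x i := by
  simp only [homEval, Pi.smul_apply, smul_eq_mul, prod_mul_distrib, prod_const, card_univ,
    Fintype.card_fin, mul_sum]
  exact sum_congr rfl fun f _ => by ring

lemma EigenEq.smul {R : Type*} [CommSemiring R] {a : ι → (Fin q → ι) → R} {l : R} {x : ι → R}
    (h : EigenEq a l x) (c : R) : EigenEq a l (c • x) := fun i => by
  rw [homEval_smul, h i, Pi.smul_apply, smul_eq_mul, mul_pow]
  ring

variable {a b : ι → (Fin q → ι) → ℝ} {x y : ι → ℝ}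

lemma continuous_homEval (a : ι → (Fin q → ι) → ℝ) (i : ι) :
    Continuous fun x => homEval a x i := by
  unfold homEval
  fun_prop

lemma homEval_nonneg (ha : ∀ i f, 0 ≤ a i f) (hx : 0 ≤ x) (i : ι) : 0 ≤ homEval a x i :=
  sum_nonneg fun f _ => mul_nonneg (ha i f) (prod_nonneg fun k _ => hx (f k))

lemma homEval_mono (ha : ∀ i f, 0 ≤ a i f) (hx : 0 ≤ x) (hxy : x ≤ y) (i : ι) :
    homEval a x i ≤ homEval a y i :=
  sum_le_sum fun f _ => mul_le_mul_of_nonneg_left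
    (prod_le_prod (fun k _ => hx (f k)) fun k _ => hxy (f k)) (ha i f)

lemma homEval_strictMono (hq : q ≠ 0) (hb : ∀ i f, 0 < b i f) (hx : 0 ≤ x) (hxy : x ≤ y)
    (hne : x ≠ y) (i : ι) : homEval b x i < homEval b y i := by
  obtain ⟨k, hk⟩ : ∃ k, x k < y k := by
    by_contra! h
    exact hne (le_antisymm hxy h)
  refine sum_lt_sum (fun f _ => mul_le_mul_of_nonneg_left
    (prod_le_prod (fun k _ => hx (f k)) fun k _ => hxy (f k)) (hb i f).le)
    ⟨fun _ => k, mem_univ _, ?_⟩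
  simp only [prod_const, card_univ, Fintype.card_fin]
  exact mul_lt_mul_of_pos_left (pow_lt_pow_left₀ hk (hx k) hq) (hb i _)

end HomEval

section Positive

variable {q : ℕ} {b : ι → (Fin q → ι) → ℝ} {x y : ι → ℝ} {r : ℝ}

noncomputable def powerStep (b : ι → (Fin q → ι) → ℝ) (x : ι → ℝ) (j : ι) : ℝ :=
  homEval b x j ^ (q⁻¹ : ℝ)

lemma powerStep_pow (hq : q ≠ 0) (hb : ∀ i f, 0 ≤ b i f) (hx : 0 ≤ x) (j : ι) :
    powerStep b x j ^ q = homEval b x j :=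
  Real.rpow_inv_natCast_pow (homEval_nonneg hb hx j) hq

lemma powerStep_smul (hq : q ≠ 0) (hb : ∀ i f, 0 ≤ b i f) {c : ℝ} (hc : 0 ≤ c) (hx : 0 ≤ x) :
    powerStep b (c • x) = c • powerStep b x := funext fun j => by
  rw [powerStep, homEval_smul, Real.mul_rpow (pow_nonneg hc q) (homEval_nonneg hb hx j),
    Real.pow_rpow_inv_natCast hc hq, Pi.smul_apply, smul_eq_mul, powerStep]

lemma powerStep_pos (hb : ∀ i f, 0 < b i f) (hx : 0 ≤ x) {k : ι} (hk : 0 < x k) (j : ι) :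
    0 < powerStep b x j := by
  refine Real.rpow_pos_of_pos (sum_pos' (fun f _ => mul_nonneg (hb j f).le
    (prod_nonneg fun k _ => hx _)) ⟨fun _ => k, mem_univ _, ?_⟩) _
  exact mul_pos (hb j _) (prod_pos fun _ _ => hk)

lemma continuous_powerStep (b : ι → (Fin q → ι) → ℝ) (j : ι) :
    Continuous fun x => powerStep b x j :=
  (Real.continuous_rpow_const (by positivity)).comp (continuous_homEval b j)

/-- Positivity of `b` makes `homEval b` strictly monotone, so `r^{1/q} y ≤ powerStep b y`
improves to a strict inequality after applying `b`. -/
lemma mul_homEval_lt_homEval_powerStep (hq : q ≠ 0) (hb : ∀ i f, 0 < b i f) (hr : 0 ≤ r)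
    (hy : 0 ≤ y) (hle : ∀ i, r * y i ^ q ≤ homEval b y i) (hne : ¬ EigenEq b r y) (i : ι) :
    r * homEval b y i < homEval b (powerStep b y) i := by
  have hb0 : ∀ i f, 0 ≤ b i f := fun i f => (hb i f).le
  set s := r ^ (q⁻¹ : ℝ)
  have hsy : 0 ≤ s • y := smul_nonneg (Real.rpow_nonneg hr _) hy
  have hsyq : ∀ j, (s • y) j ^ q = r * y j ^ q := fun j => by
    rw [Pi.smul_apply, smul_eq_mul, mul_pow, Real.rpow_inv_natCast_pow hr hq]
  have hle' : s • y ≤ powerStep b y := fun j =>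
    (pow_le_pow_iff_left₀ (b := powerStep b y j) (hsy j)
      (Real.rpow_nonneg (homEval_nonneg hb0 hy j) _) hq).1
      (by rw [powerStep_pow hq hb0 hy, hsyq]; exact hle j)
  have hne' : s • y ≠ powerStep b y := fun heq =>
    hne fun j => by rw [← powerStep_pow hq hb0 hy j, ← heq, hsyq]
  calc r * homEval b y i = homEval b (s • y) i := by
        rw [homEval_smul, Real.rpow_inv_natCast_pow hr hq]
    _ < homEval b (powerStep b y) i := homEval_strictMono hq hb hsy hle' hne' i

lemma exists_pos_of_mem_stdSimplex {s : ι → ℝ} (hs : s ∈ stdSimplex ℝ ι) : ∃ k, 0 < s k := by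
  by_contra! h
  have := hs.2
  rw [sum_eq_zero fun k _ => le_antisymm (h k) (hs.1 k)] at this
  exact zero_ne_one this

noncomputable def collatzWielandt [Nonempty ι] (b : ι → (Fin q → ι) → ℝ) (y : ι → ℝ) : ℝ :=
  univ.inf' univ_nonempty fun i => homEval b y i / y i ^ q

variable [Nonempty ι]

lemma le_collatzWielandt_iff (hy : ∀ i, 0 < y i) :
    r ≤ collatzWielandt b y ↔ ∀ i, r * y i ^ q ≤ homEval b y i := by
  simp only [collatzWielandt, le_inf'_iff, mem_univ, true_implies,
    le_div_iff₀ (pow_pos (hy _) q)]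

lemma lt_collatzWielandt_iff (hy : ∀ i, 0 < y i) :
    r < collatzWielandt b y ↔ ∀ i, r * y i ^ q < homEval b y i := by
  simp only [collatzWielandt, lt_inf'_iff, mem_univ, true_implies,
    lt_div_iff₀ (pow_pos (hy _) q)]

lemma collatzWielandt_smul {c : ℝ} (hc : 0 < c) (y : ι → ℝ) :
    collatzWielandt b (c • y) = collatzWielandt b y := by
  simp only [collatzWielandt, homEval_smul, Pi.smul_apply, smul_eq_mul, mul_pow,
    mul_div_mul_left _ _ (pow_ne_zero q hc.ne')]

lemma collatzWielandt_lt_powerStep (hq : q ≠ 0) (hb : ∀ i f, 0 < b i f) (hy : ∀ i, 0 < y i)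
    (hne : ¬ EigenEq b (collatzWielandt b y) y) :
    collatzWielandt b y < collatzWielandt b (powerStep b y) := by
  have hy0 : 0 ≤ y := fun i => (hy i).le
  have hsub := (le_collatzWielandt_iff (b := b) hy).1 le_rfl
  have hr : 0 ≤ collatzWielandt b y := (le_collatzWielandt_iff hy).2 fun i => by
    simpa using homEval_nonneg (fun i f => (hb i f).le) hy0 i
  refine (lt_collatzWielandt_iff (powerStep_pos hb hy0 (hy (Classical.arbitrary ι)))).2
    fun i => ?_
  rw [powerStep_pow hq (fun i f => (hb i f).le) hy0]
  exact mul_homEval_lt_homEval_powerStep hq hb hr hy0 hsub hne i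

/-- A maximiser over the simplex of the Collatz–Wielandt function of one power-iteration step is
an eigenvector, since otherwise a further step would increase the function. -/
theorem exists_pos_eigenEq_of_pos (hq : q ≠ 0) (hb : ∀ i f, 0 < b i f) :
    ∃ ρ u, (∀ i, 0 < u i) ∧ EigenEq b ρ u := by
  classical
  have hpos : ∀ s ∈ stdSimplex ℝ ι, ∀ j, 0 < powerStep b s j := fun s hs =>
    (exists_pos_of_mem_stdSimplex hs).elim fun _ hk => powerStep_pos hb hs.1 hk
  have hcont : ContinuousOn (fun s => collatzWielandt b (powerStep b s)) (stdSimplex ℝ ι) := by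
    refine ContinuousOn.finset_inf'_apply _ fun i _ => ContinuousOn.div ?_ ?_ ?_
    · exact ((continuous_homEval b i).comp (continuous_pi (continuous_powerStep b))).continuousOn
    · exact ((continuous_powerStep b i).pow q).continuousOn
    · exact fun s hs => pow_ne_zero q (hpos s hs i).ne'
  obtain ⟨s, hs, hmax⟩ := (isCompact_stdSimplex ℝ ι).exists_isMaxOn
    ⟨_, single_mem_stdSimplex ℝ (Classical.arbitrary ι)⟩ hcont
  set x := powerStep b s
  have hx : ∀ j, 0 < x j := hpos s hs
  refine ⟨collatzWielandt b x, x, hx, ?_⟩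
  by_contra hne
  refine (collatzWielandt_lt_powerStep hq hb hx hne).not_ge ?_
  -- `powerStep b x` is a positive multiple of `powerStep b s'` for the point `s'` of the simplex
  -- on the ray of `x`.
  set σ := ∑ j, x j
  have hσ : 0 < σ := sum_pos (fun j _ => hx j) univ_nonempty
  have hs' : σ⁻¹ • x ∈ stdSimplex ℝ ι :=
    ⟨fun j => smul_nonneg (inv_nonneg.2 hσ.le) (hx j).le, by
      simp only [Pi.smul_apply, smul_eq_mul, ← mul_sum]
      exact inv_mul_cancel₀ hσ.ne'⟩
  have hx' : x = σ • (σ⁻¹ • x) := by rw [smul_smul, mul_inv_cancel₀ hσ.ne', one_smul]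
  calc collatzWielandt b (powerStep b x)
      = collatzWielandt b (powerStep b (σ⁻¹ • x)) := by
        conv_lhs => rw [hx', powerStep_smul hq (fun i f => (hb i f).le) hσ.le hs'.1]
        exact collatzWielandt_smul hσ _
    _ ≤ collatzWielandt b x := hmax hs'

end Positive

section Irreducible

variable {q : ℕ} {a : ι → (Fin q → ι) → ℝ}

lemma mul_pow_le_prod {κ : Type*} {v : κ → ℝ} {μ : ℝ} (hμ : 0 ≤ μ) (hv : ∀ k, μ ≤ v k)
    (f : Fin q → κ)
    (k₀ : Fin q) : v (f k₀) * μ ^ (q - 1) ≤ ∏ k, v (f k) := by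
  classical
  rw [← mul_prod_erase univ _ (mem_univ k₀)]
  refine mul_le_mul_of_nonneg_left ?_ (hμ.trans (hv _))
  calc μ ^ (q - 1) = ∏ _k ∈ univ.erase k₀, μ := by
        rw [prod_const, card_erase_of_mem (mem_univ _), card_univ, Fintype.card_fin]
    _ ≤ ∏ k ∈ univ.erase k₀, v (f k) := prod_le_prod (fun _ _ => hμ) fun k _ => hv (f k)

lemma exists_mul_le_of_reflTransGen (ha : ∀ i f, 0 ≤ a i f) {c B : ℝ} (hc : 0 < c) (hB : 0 < B)
    (hca : ∀ i f, a i f ≠ 0 → c ≤ a i f) {i j : ι}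
    (hij : Relation.ReflTransGen (SuppArc a) i j) :
    ∃ γ > 0, ∀ ρ ≤ B, ∀ v : ι → ℝ, (∀ k, 0 < v k) → (∀ k, v i ≤ v k) →
      (∀ k, homEval a v k ≤ ρ * v k ^ q) → γ * v j ≤ v i := by
  induction hij with
  | refl => exact ⟨1, one_pos, fun _ _ _ _ _ _ => (one_mul _).le⟩
  | @tail b j' _ harc ih =>
    obtain ⟨γ, hγ, hγv⟩ := ih
    obtain ⟨f, hf, k₀, rfl⟩ := harc
    refine ⟨c * γ ^ q / B, by positivity, fun ρ hρ v hv hmin hsub => ?_⟩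
    have hterm : c * (v (f k₀) * v i ^ (q - 1)) ≤ ρ * v b ^ q :=
      calc c * (v (f k₀) * v i ^ (q - 1)) ≤ a b f * ∏ k, v (f k) :=
            mul_le_mul (hca b f hf) (mul_pow_le_prod (hv i).le hmin f k₀)
              (mul_nonneg (hv _).le (pow_nonneg (hv i).le _)) (ha b f)
        _ ≤ homEval a v b := single_le_sum (f := fun f => a b f * ∏ k, v (f k))
            (fun f _ => mul_nonneg (ha b f) (prod_nonneg fun k _ => (hv _).le)) (mem_univ f)
        _ ≤ ρ * v b ^ q := hsub b
    have hpow : v i ^ q = v i * v i ^ (q - 1) := by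
      rw [← pow_succ', Nat.sub_add_cancel k₀.pos]
    rw [div_mul_eq_mul_div, div_le_iff₀ hB]
    refine le_of_mul_le_mul_right ?_ (pow_pos (hv i) (q - 1))
    calc c * γ ^ q * v (f k₀) * v i ^ (q - 1) = γ ^ q * (c * (v (f k₀) * v i ^ (q - 1))) := by
          ring
      _ ≤ γ ^ q * (B * v b ^ q) := mul_le_mul_of_nonneg_left
          (hterm.trans (mul_le_mul_of_nonneg_right hρ (pow_nonneg (hv b).le q))) (by positivity)
      _ = B * (γ * v b) ^ q := by ring
      _ ≤ B * v i ^ q := mul_le_mul_of_nonneg_left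
          (pow_le_pow_left₀ (mul_nonneg hγ.le (hv b).le) (hγv ρ hρ v hv hmin hsub) q) hB.le
      _ = v i * B * v i ^ (q - 1) := by rw [hpow]; ring

lemma mem_Icc_of_eigenEq {ρ : ℝ} {v : ι → ℝ} (ha : ∀ i f, 0 ≤ a i f) (hv : ∀ i, 0 < v i)
    (hv_le : ∀ i, v i ≤ 1) {i₁ : ι} (hv₁ : v i₁ = 1) (heig : EigenEq a ρ v) :
    ρ ∈ Set.Icc 0 (∑ f, a i₁ f) := by
  have hρ : homEval a v i₁ = ρ := by rw [heig i₁, hv₁, one_pow, mul_one]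
  refine hρ ▸ ⟨homEval_nonneg ha (fun i => (hv i).le) i₁, sum_le_sum fun f _ => ?_⟩
  exact mul_le_of_le_one_right (ha i₁ f) (prod_le_one (fun k _ => (hv _).le) fun k _ => hv_le _)

variable [Nonempty ι]

lemma exists_pos_le_of_ne_zero (ha : ∀ i f, 0 ≤ a i f) :
    ∃ c > 0, ∀ i f, a i f ≠ 0 → c ≤ a i f := by
  classical
  set g : ι × (Fin q → ι) → ℝ := fun p => if a p.1 p.2 = 0 then 1 else a p.1 p.2
  obtain ⟨p, hp⟩ := Finite.exists_min g
  refine ⟨g p, ?_, fun i f hf => by simpa [g, hf] using hp (i, f)⟩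
  by_cases h : a p.1 p.2 = 0
  · simp [g, h]
  · simpa [g, h] using (ha p.1 p.2).lt_of_ne' h

lemma exists_eigenEq_add_mem_box (hq : q ≠ 0) (ha : ∀ i f, 0 ≤ a i f)
    (hwi : ∀ i j, Relation.ReflTransGen (SuppArc a) i j) :
    ∃ γ > 0, ∀ ε ∈ Set.Ioc (0 : ℝ) 1, ∃ ρ v, ρ ∈ Set.Icc 0 (∑ i, ∑ f, (a i f + 1)) ∧
      (∀ i, v i ∈ Set.Icc γ 1) ∧ EigenEq (fun i f => a i f + ε) ρ v := by
  set B := ∑ i, ∑ f, (a i f + 1)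
  have hB : 0 < B :=
    sum_pos (fun i _ => sum_pos (fun f _ => by linarith [ha i f]) univ_nonempty) univ_nonempty
  obtain ⟨c, hc, hca⟩ := exists_pos_le_of_ne_zero ha
  choose Γ hΓ hΓv using fun i j => exists_mul_le_of_reflTransGen ha hc hB hca (hwi i j)
  obtain ⟨p, hp⟩ := Finite.exists_min fun p : ι × ι => Γ p.1 p.2
  refine ⟨Γ p.1 p.2, hΓ _ _, fun ε ⟨hε, hε1⟩ => ?_⟩
  obtain ⟨ρ, u, hu, heig⟩ := exists_pos_eigenEq_of_pos hq
    fun i f => (by linarith [ha i f] : 0 < a i f + ε)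
  obtain ⟨i₁, hi₁⟩ := Finite.exists_max u
  obtain ⟨i₀, hi₀⟩ := Finite.exists_min u
  set v := (u i₁)⁻¹ • u
  have hv : ∀ i, 0 < v i := fun i => mul_pos (inv_pos.2 (hu i₁)) (hu i)
  have hv_le : ∀ i, v i ≤ 1 := fun i => (inv_mul_le_one₀ (hu i₁)).2 (hi₁ i)
  have hv₀ : ∀ i, v i₀ ≤ v i := fun i =>
    mul_le_mul_of_nonneg_left (hi₀ i) (inv_pos.2 (hu i₁)).le
  have hv₁ : v i₁ = 1 := inv_mul_cancel₀ (hu i₁).ne'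
  have heig' : EigenEq (fun i f => a i f + ε) ρ v := heig.smul _
  obtain ⟨hρ0, hρ⟩ := mem_Icc_of_eigenEq (fun i f => by linarith [ha i f]) hv hv_le hv₁ heig'
  have hρB : ρ ≤ B := hρ.trans <| (sum_le_sum fun f _ => by linarith).trans <|
    single_le_sum (f := fun i => ∑ f, (a i f + 1))
      (fun i _ => sum_nonneg fun f _ => by linarith [ha i f]) (mem_univ i₁)
  have hsub : ∀ k, homEval a v k ≤ ρ * v k ^ q := fun k => by
    rw [← heig' k]
    exact sum_le_sum fun f _ => mul_le_mul_of_nonneg_right (by linarith)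
      (prod_nonneg fun k _ => (hv _).le)
  refine ⟨ρ, v, ⟨hρ0, hρB⟩, fun i => ⟨?_, hv_le i⟩, heig'⟩
  calc Γ p.1 p.2 ≤ Γ i₀ i₁ * v i₁ := by rw [hv₁, mul_one]; exact hp (i₀, i₁)
    _ ≤ v i₀ := hΓv i₀ i₁ ρ hρB v hv hv₀ hsub
    _ ≤ v i := hv₀ i

/-- Take a limit point, as `ε → 0`, of the Perron pairs of `a + ε`, which stay in a compact box. -/
theorem exists_pos_eigenEq_of_reflTransGen (hq : q ≠ 0) (ha : ∀ i f, 0 ≤ a i f)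
    (hwi : ∀ i j, Relation.ReflTransGen (SuppArc a) i j) :
    ∃ ρ u, 0 ≤ ρ ∧ (∀ i, 0 < u i) ∧ EigenEq a ρ u := by
  obtain ⟨γ, hγ, hbox⟩ := exists_eigenEq_add_mem_box hq ha hwi
  set B := ∑ i, ∑ f, (a i f + 1)
  set K : Set (ℝ × ℝ × (ι → ℝ)) :=
    (Set.Icc 0 1 ×ˢ Set.Icc 0 B ×ˢ Set.univ.pi fun _ => Set.Icc γ 1) ∩
      {p | EigenEq (fun i f => a i f + p.1) p.2.1 p.2.2}
  have hK : IsCompact K := by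
    refine (isCompact_Icc.prod (isCompact_Icc.prod (isCompact_univ_pi fun _ => isCompact_Icc)))
      |>.inter_right ?_
    simp only [EigenEq, Set.ofPred_forall]
    exact isClosed_iInter fun i => isClosed_eq (by unfold homEval; fun_prop) (by fun_prop)
  have hsub : Set.Icc (0 : ℝ) 1 ⊆ Prod.fst '' K := by
    rw [← closure_Ioc zero_ne_one]
    refine (hK.image continuous_fst).isClosed.closure_subset_iff.2 fun ε hε => ?_
    obtain ⟨ρ, v, hρ, hv, heig⟩ := hbox ε hε
    exact ⟨(ε, ρ, v), ⟨⟨Set.Ioc_subset_Icc_self hε, hρ, fun i _ => hv i⟩, heig⟩, rfl⟩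
  obtain ⟨⟨ε, ρ, v⟩, ⟨⟨-, hρ, hv⟩, heig⟩, rfl⟩ := hsub ⟨le_rfl, zero_le_one⟩
  exact ⟨ρ, v, hρ.1, fun i => hγ.trans_le (hv i trivial).1, by simpa using heig⟩

end Irreducible

section Uniqueness

variable {q : ℕ} {a : ι → (Fin q → ι) → ℝ} {ρ σ : ℝ} {u y : ι → ℝ}

lemma eq_of_prod_eq_prod_of_le {κ : Type*} [Fintype κ] {f g : κ → ℝ} (hf : 0 ≤ f) (hfg : f ≤ g)
    (hg : ∀ k, 0 < g k) (h : ∏ k, f k = ∏ k, g k) : f = g := by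
  classical
  by_contra hne
  obtain ⟨k, hk⟩ := Function.ne_iff.1 hne
  refine h.not_lt ?_
  rw [← mul_prod_erase univ f (mem_univ k), ← mul_prod_erase univ g (mem_univ k)]
  calc f k * ∏ j ∈ univ.erase k, f j ≤ f k * ∏ j ∈ univ.erase k, g j :=
        mul_le_mul_of_nonneg_left (prod_le_prod (fun j _ => hf j) fun j _ => hfg j) (hf k)
    _ < g k * ∏ j ∈ univ.erase k, g j :=
        mul_lt_mul_of_pos_right ((hfg k).lt_of_ne hk) (prod_pos fun j _ => hg j)

lemma exists_le_smul_eq (hu : ∀ i, 0 < u i) (hy : 0 ≤ y) (hy0 : y ≠ 0) :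
    ∃ t > 0, ∃ i₁, y ≤ t • u ∧ y i₁ = t * u i₁ := by
  obtain ⟨i, hi⟩ := Function.ne_iff.1 hy0
  have : Nonempty ι := ⟨i⟩
  obtain ⟨i₁, hi₁⟩ := Finite.exists_max fun i => y i / u i
  refine ⟨y i₁ / u i₁, (div_pos ((hy i).lt_of_ne' hi) (hu i)).trans_le (hi₁ i), i₁,
    fun j => ?_, (div_mul_cancel₀ _ (hu i₁).ne').symm⟩
  rw [Pi.smul_apply, smul_eq_mul, ← div_le_iff₀ (hu j)]
  exact hi₁ j

lemma le_of_mul_pow_le_homEval (ha : ∀ i f, 0 ≤ a i f) (hu : ∀ i, 0 < u i) (heig : EigenEq a ρ u)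
    (hy : 0 ≤ y) (hy0 : y ≠ 0) (hσ : ∀ i, σ * y i ^ q ≤ homEval a y i) : σ ≤ ρ := by
  obtain ⟨t, ht, i₁, hyu, hyt⟩ := exists_le_smul_eq hu hy hy0
  have hpos : 0 < y i₁ ^ q := pow_pos (hyt ▸ mul_pos ht (hu i₁)) q
  refine le_of_mul_le_mul_right ?_ hpos
  calc σ * y i₁ ^ q ≤ homEval a y i₁ := hσ i₁
    _ ≤ homEval a (t • u) i₁ := homEval_mono ha hy hyu i₁
    _ = ρ * y i₁ ^ q := by rw [heig.smul t i₁, hyt, Pi.smul_apply, smul_eq_mul]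

lemma eq_smul_of_mul_pow_le_homEval (ha : ∀ i f, 0 ≤ a i f)
    (hwi : ∀ i j, Relation.ReflTransGen (SuppArc a) i j) (hu : ∀ i, 0 < u i)
    (heig : EigenEq a ρ u) (hy : 0 ≤ y) (hy0 : y ≠ 0) (hρ : ∀ i, ρ * y i ^ q ≤ homEval a y i) :
    ∃ t : ℝ, 0 < t ∧ y = t • u := by
  obtain ⟨t, ht, i₁, hyu, hyt⟩ := exists_le_smul_eq hu hy hy0
  set w := t • u
  have hweig : EigenEq a ρ w := heig.smul t
  have hw : ∀ i, 0 < w i := fun i => mul_pos ht (hu i)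
  have hterm : ∀ i f, a i f * ∏ k, y (f k) ≤ a i f * ∏ k, w (f k) := fun i f =>
    mul_le_mul_of_nonneg_left (prod_le_prod (fun k _ => hy _) fun k _ => hyu _) (ha i f)
  -- Where `y i = w i`, the inequality `a y^q ≤ a w^q` is tight term by term.
  have hclosed : ∀ i j, SuppArc a i j → y i = w i → y j = w j := by
    rintro i _ ⟨f, hf, k, rfl⟩ hi
    have hsum : homEval a y i = homEval a w i := le_antisymm (homEval_mono ha hy hyu i)
      (by rw [hweig i, ← hi]; exact hρ i)
    have hprod := mul_left_cancel₀ hf ((sum_eq_sum_iff_of_le fun f _ => hterm i f).1 hsum f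
      (mem_univ f))
    exact congrFun (eq_of_prod_eq_prod_of_le (f := fun k => y (f k)) (g := fun k => w (f k))
      (fun k => hy _) (fun k => hyu _) (fun k => hw _) hprod) k
  refine ⟨t, ht, funext fun j => ?_⟩
  induction hwi i₁ j with
  | refl => exact hyt
  | tail _ harc ih => exact hclosed _ _ harc ih

end Uniqueness

section Complex

variable {q : ℕ} {a : ι → (Fin q → ι) → ℝ} {ρ : ℝ} {u : ι → ℝ} {l c : ℂ} {x d : ι → ℂ}

def complexify (a : ι → (Fin q → ι) → ℝ) : ι → (Fin q → ι) → ℂ := fun i f => a i f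

lemma homEval_complexify (a : ι → (Fin q → ι) → ℝ) (y : ι → ℝ) (i : ι) :
    homEval (complexify a) (fun j => (y j : ℂ)) i = homEval a y i := by
  simp [homEval, complexify]

lemma norm_mul_pow_le_homEval_norm (ha : ∀ i f, 0 ≤ a i f) (hx : EigenEq (complexify a) l x)
    (i : ι) : ‖l‖ * ‖x i‖ ^ q ≤ homEval a (fun j => ‖x j‖) i := by
  rw [← norm_pow, ← norm_mul, ← hx i]
  refine (norm_sum_le _ _).trans_eq (sum_congr rfl fun f _ => ?_)
  rw [norm_mul, norm_prod, complexify, Complex.norm_real, Real.norm_of_nonneg (ha i f)]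

lemma norm_ne_zero_of_ne_zero {κ : Type*} {x : κ → ℂ} (hx : x ≠ 0) : (fun i => ‖x i‖) ≠ 0 :=
  fun h => hx (funext fun i => norm_eq_zero.1 (congrFun h i))

lemma norm_le_of_eigenEq (ha : ∀ i f, 0 ≤ a i f) (hu : ∀ i, 0 < u i) (heig : EigenEq a ρ u)
    (hx : EigenEq (complexify a) l x) (hx0 : x ≠ 0) : ‖l‖ ≤ ρ :=
  le_of_mul_pow_le_homEval ha hu heig (fun _ => norm_nonneg _) (norm_ne_zero_of_ne_zero hx0)
    (norm_mul_pow_le_homEval_norm ha hx)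

lemma norm_eq_of_eigenEq (ha : ∀ i f, 0 ≤ a i f)
    (hwi : ∀ i j, Relation.ReflTransGen (SuppArc a) i j) (hu : ∀ i, 0 < u i)
    (heig : EigenEq a ρ u) {i₀ : ι} (hu₀ : u i₀ = 1) (hx : EigenEq (complexify a) l x)
    (hl : ‖l‖ = ρ) (hx₀ : x i₀ = 1) (i : ι) : ‖x i‖ = u i := by
  have hx0 : x ≠ 0 := fun h => one_ne_zero (hx₀.symm.trans (congrFun h i₀))
  obtain ⟨t, -, ht⟩ := eq_smul_of_mul_pow_le_homEval ha hwi hu heig (fun _ => norm_nonneg _)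
    (norm_ne_zero_of_ne_zero hx0) (hl ▸ norm_mul_pow_le_homEval_norm ha hx)
  have ht1 : t = 1 := by simpa [hx₀, hu₀] using (congrFun ht i₀).symm
  simpa [ht1] using congrFun ht i

lemma eq_one_of_sum_mul_eq_sum {κ : Type*} [Fintype κ] {w : κ → ℝ} {z : κ → ℂ} (hw : 0 ≤ w)
    (hz : ∀ k, ‖z k‖ ≤ 1) (h : ∑ k, (w k : ℂ) * z k = ∑ k, (w k : ℂ)) {k : κ} (hk : w k ≠ 0) :
    z k = 1 := by
  have hre : ∀ k, w k * (z k).re ≤ w k := fun k =>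
    mul_le_of_le_one_right (hw k) ((Complex.re_le_norm _).trans (hz k))
  have hsum : ∑ k, w k * (z k).re = ∑ k, w k := by
    simpa [Complex.re_sum] using congrArg Complex.re h
  have h1 : (z k).re = 1 := mul_left_cancel₀ hk
    (((sum_eq_sum_iff_of_le fun k _ => hre k).1 hsum k (mem_univ k)).trans (mul_one _).symm)
  have hn : ‖z k‖ = 1 := le_antisymm (hz k) (h1 ▸ Complex.re_le_norm _)
  exact Complex.ext h1 (Complex.abs_re_eq_norm.1 (by rw [h1, hn, abs_one]))

lemma eigenEq_mul_of_prod_eq (heig : EigenEq a ρ u)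
    (hd : ∀ i f, a i f ≠ 0 → ∏ k, d (f k) = c * d i ^ q) :
    EigenEq (complexify a) (ρ * c) fun i => d i * u i := by
  intro i
  have hterm : ∀ f, complexify a i f * ∏ k, (d (f k) * u (f k)) =
      c * d i ^ q * (complexify a i f * ∏ k, (u (f k) : ℂ)) := by
    intro f
    rw [prod_mul_distrib]
    by_cases hf : a i f = 0
    · simp [complexify, hf]
    · rw [hd i f hf]; ring
  calc homEval (complexify a) (fun i => d i * u i) i
      = c * d i ^ q * homEval (complexify a) (fun j => (u j : ℂ)) i := by
        rw [homEval, homEval, mul_sum]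
        exact sum_congr rfl fun f _ => hterm f
    _ = ρ * c * (d i * u i) ^ q := by
        rw [homEval_complexify, heig i]
        push_cast
        ring

/-- In `a (d u)^q = ρ c (d u)^{[q]}` the left side is a positive combination of the unit
numbers `∏ₖ d (f k)` with total weight `ρ u_i^q`, so all of them equal `c d_i^q`. -/
lemma prod_eq_of_eigenEq_mul (ha : ∀ i f, 0 ≤ a i f) (hu : ∀ i, 0 < u i) (heig : EigenEq a ρ u)
    (hc : ‖c‖ = 1) (hd : ∀ i, ‖d i‖ = 1) (hx : EigenEq (complexify a) (ρ * c) fun i => d i * u i)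
    (i : ι) (f : Fin q → ι) (hf : a i f ≠ 0) : ∏ k, d (f k) = c * d i ^ q := by
  set e := c * d i ^ q
  have he : ‖e‖ = 1 := by rw [norm_mul, norm_pow, hc, hd, one_pow, one_mul]
  have he0 : e ≠ 0 := norm_ne_zero_iff.1 (he.symm ▸ one_ne_zero)
  set w : (Fin q → ι) → ℝ := fun f => a i f * ∏ k, u (f k)
  have hsum : ∑ f, (w f : ℂ) * ∏ k, d (f k) = e * ∑ f, (w f : ℂ) := by
    have hw : ∑ f, (w f : ℂ) = ρ * u i ^ q := by exact_mod_cast heig i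
    calc ∑ f, (w f : ℂ) * ∏ k, d (f k) = homEval (complexify a) (fun i => d i * u i) i := by
          refine sum_congr rfl fun f _ => ?_
          simp only [w, complexify, prod_mul_distrib]
          push_cast
          ring
      _ = e * ∑ f, (w f : ℂ) := by rw [hx i, hw]; ring
  have hz : ∀ f : Fin q → ι, ‖(∏ k, d (f k)) / e‖ ≤ 1 := fun f => by
    simp [norm_prod, he, hd]
  have h1 := eq_one_of_sum_mul_eq_sum (w := w) (z := fun f => (∏ k, d (f k)) / e)
    (fun f => mul_nonneg (ha i f) (prod_nonneg fun k _ => (hu _).le)) hz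
    (by simp only [mul_div_assoc', ← sum_div, hsum, mul_div_cancel_left₀ _ he0])
    (mul_ne_zero hf (prod_ne_zero_iff.2 fun k _ => (hu _).ne'))
  exact (div_eq_one_iff_eq he0).1 h1

theorem bijOn_phase (ha : ∀ i f, 0 ≤ a i f) (hwi : ∀ i j, Relation.ReflTransGen (SuppArc a) i j)
    (hu : ∀ i, 0 < u i) (heig : EigenEq a ρ u) (hρ : 0 ≤ ρ) (hc : ‖c‖ = 1) {i₀ : ι}
    (hu₀ : u i₀ = 1) :
    Set.BijOn (fun (x : ι → ℂ) i => x i / (‖x i‖ : ℂ))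
      {x | x i₀ = 1 ∧ EigenEq (complexify a) (ρ * c) x}
      {d | (∀ i, d i ≠ 0) ∧ d i₀ = 1 ∧ ∀ i f, a i f ≠ 0 → ∏ k, d (f k) = c * d i ^ q} := by
  have hl : ‖(ρ : ℂ) * c‖ = ρ := by
    rw [norm_mul, Complex.norm_real, Real.norm_of_nonneg hρ, hc, mul_one]
  have hnorm : ∀ x : ι → ℂ, x i₀ = 1 ∧ EigenEq (complexify a) (ρ * c) x → ∀ i, ‖x i‖ = u i :=
    fun x hx => norm_eq_of_eigenEq ha hwi hu heig hu₀ hx.2 hl hx.1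
  have hu' : ∀ i, (u i : ℂ) ≠ 0 := fun i => Complex.ofReal_ne_zero.2 (hu i).ne'
  have hphase : ∀ x : ι → ℂ, x i₀ = 1 ∧ EigenEq (complexify a) (ρ * c) x →
      x = fun i => x i / (‖x i‖ : ℂ) * u i := fun x hx => funext fun i => by
    rw [hnorm x hx i, div_mul_cancel₀ _ (hu' i)]
  refine ⟨fun x hx => ?_, fun x hx y hy hxy => ?_, fun d hd => ?_⟩
  · have hd : ∀ i, ‖x i / (‖x i‖ : ℂ)‖ = 1 := fun i => by
      rw [norm_div, Complex.norm_real, norm_norm, hnorm x hx i, div_self (hu i).ne']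
    refine ⟨fun i => norm_ne_zero_iff.1 (by rw [hd]; exact one_ne_zero), by simp [hx.1],
      prod_eq_of_eigenEq_mul ha hu heig hc hd ?_⟩
    rw [← hphase x hx]
    exact hx.2
  · rw [hphase x hx, hphase y hy]
    exact funext fun i => congrArg (· * (u i : ℂ)) (congrFun hxy i)
  · set x : ι → ℂ := fun i => d i * u i
    have hx : x i₀ = 1 ∧ EigenEq (complexify a) (ρ * c) x :=
      ⟨by simp [x, hd.2.1, hu₀], eigenEq_mul_of_prod_eq heig hd.2.2⟩
    refine ⟨x, hx, funext fun i => ?_⟩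
    dsimp only
    rw [hnorm x hx i, mul_div_cancel_right₀ _ (hu' i)]

end Complex

lemma Nonneg.exists_eq_complexify {κ : Type} {A : Tensor κ m} (hA : Nonneg A) :
    ∃ a : κ → (Fin (m - 1) → κ) → ℝ, (∀ i f, 0 ≤ a i f) ∧ A = complexify a := by
  choose a ha hA using hA
  exact ⟨a, ha, funext fun i => funext (hA i)⟩

lemma WeaklyIrreducible.reflTransGen_suppArc {κ : Type} {a : κ → (Fin (m - 1) → κ) → ℝ}
    (hwi : WeaklyIrreducible (complexify a)) (i j : κ) :
    Relation.ReflTransGen (SuppArc a) i j := by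
  have : Arc (complexify a) = SuppArc a := by
    ext i j
    simp [Arc, SuppArc, complexify]
  exact this ▸ hwi i j

lemma specRad_complexify [Nonempty ι] {a : ι → (Fin (m - 1) → ι) → ℝ} {ρ : ℝ} {u : ι → ℝ}
    (ha : ∀ i f, 0 ≤ a i f) (hu : ∀ i, 0 < u i) (heig : EigenEq a ρ u) (hρ : 0 ≤ ρ) :
    specRad (complexify a) = ρ := by
  refine IsGreatest.csSup_eq ⟨⟨ρ, ⟨fun i => u i, fun h => ?_, fun i => ?_⟩, ?_⟩, ?_⟩
  · exact (hu (Classical.arbitrary ι)).ne' (by simpa using congrFun h (Classical.arbitrary ι))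
  · exact (homEval_complexify a u i).trans (by rw [heig i]; push_cast; rfl)
  · simp [abs_of_nonneg hρ]
  · rintro _ ⟨l, ⟨x, hx0, hx⟩, rfl⟩
    exact norm_le_of_eigenEq ha hu heig hx hx0

lemma diagConj_eq_iff {κ : Type} {A : Tensor κ m} {d : κ → ℂ} (hd : ∀ i, d i ≠ 0) {c : ℂ}
    (hc : c ≠ 0) :
    (∀ i f, A i f = c⁻¹ * diagConj d A i f) ↔
      ∀ i f, A i f ≠ 0 → ∏ k, d (f k) = c * d i ^ (m - 1) := by
  refine forall₂_congr fun i f => ?_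
  by_cases hA : A i f = 0
  · simp [hA, diagConj]
  have : c⁻¹ * diagConj d A i f = A i f * ((∏ k, d (f k)) / (c * d i ^ (m - 1))) := by
    rw [diagConj]
    ring
  rw [this, eq_comm, mul_eq_left₀ hA,
    div_eq_one_iff_eq (mul_ne_zero hc (pow_ne_zero _ (hd i)))]
  exact (imp_iff_right hA).symm

lemma Dgj_complexify {n : ℕ} [NeZero n] (a : Fin n → (Fin (m - 1) → Fin n) → ℝ) (ℓ j : ℕ) :
    Dgj (complexify a) ℓ j = {d | (∀ i, d i ≠ 0) ∧ d 0 = 1 ∧ ∀ i f, a i f ≠ 0 →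
      ∏ k, d (f k) = Complex.exp ((2 * Real.pi * j / ℓ : ℝ) * Complex.I) * d i ^ (m - 1)} := by
  ext d
  refine and_congr_right fun hd => and_congr_right fun _ => ?_
  rw [neg_mul, Complex.exp_neg, diagConj_eq_iff hd (Complex.exp_ne_zero _)]
  simp [complexify]

theorem stmt8_general {n m ℓ : ℕ} [NeZero n] (hm : 2 ≤ m)
    (A : Tensor (Fin n) m) (hA : Nonneg A) (hwi : WeaklyIrreducible A) (j : ℕ) :
    Set.BijOn (fun (x : Fin n → ℂ) (i : Fin n) => x i / (‖x i‖ : ℂ))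
      {x : Fin n → ℂ | x 0 = 1 ∧ ∀ i, tApp A x i =
        (((specRad A : ℝ) : ℂ) * Complex.exp ((2 * Real.pi * j / ℓ : ℝ) * Complex.I))
          * x i ^ (m - 1)}
      (Dgj A ℓ j) := by
  obtain ⟨a, ha, rfl⟩ := hA.exists_eq_complexify
  have hwi' := hwi.reflTransGen_suppArc
  obtain ⟨ρ, u, hρ, hu, heig⟩ := exists_pos_eigenEq_of_reflTransGen (by omega) ha hwi'
  rw [specRad_complexify ha hu heig hρ, Dgj_complexify]
  exact bijOn_phase ha hwi' (fun i => mul_pos (inv_pos.2 (hu 0)) (hu i)) (heig.smul (u 0)⁻¹) hρ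
    (Complex.norm_exp_ofReal_mul_I _) (inv_mul_cancel₀ (hu 0).ne')

/-- For each `j`, the map `x ↦ D_x = diag(xᵢ/|xᵢ|)` is a bijection between the set of
eigenvectors of `A` for `λ_j = ρ(A)e^{2πij/ℓ}` normalized by `x₁ = 1` and `𝔇^{(j)}(A)`. -/
theorem stmt8 {n m ℓ : ℕ} [NeZero n] (hm : 2 ≤ m) (hl : 1 ≤ ℓ)
    (A : Tensor (Fin n) m) (hA : Nonneg A) (hwi : WeaklyIrreducible A)
    (hsym : SpectralSymm A ℓ) (j : ℕ) (hj : j ≤ ℓ - 1) :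
    Set.BijOn (fun (x : Fin n → ℂ) (i : Fin n) => x i / (‖x i‖ : ℂ))
      {x : Fin n → ℂ | x 0 = 1 ∧ ∀ i, tApp A x i =
        (((specRad A : ℝ) : ℂ) * Complex.exp ((2 * Real.pi * j / ℓ : ℝ) * Complex.I))
          * x i ^ (m - 1)}
      (Dgj A ℓ j) :=
  stmt8_general hm A hA hwi j

end PaperTensor
end

section
/- Let A be a nonnegative irreducible tensor of order m and dimension n whose solid graph has r weakly connected components. Then every D ∈ 𝔇^{(0)}(A) satisfies D^{(m-1)^r} = I, and the stabilizing index satisfies s(A) ≤ (m−1)^{r(n−1)}. -/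
/-!
If `D = diag d ∈ 𝔇^{(0)}(A)`, every nonzero entry `a_{i i₂ … i_m}` forces
`d_{i₂} ⋯ d_{i_m} = d_i^{m-1}`. On a solid arc this says `d_i^{m-1} = d_j^{m-1}`, so `d^{m-1}`
is constant on each weak component of `G^s(A)`. Irreducibility then lets one propagate the
equality `(d_i^{m-1})^{(m-1)^k} = (d_1^{m-1})^{(m-1)^k} = 1` to one new component with each
increase of `k`, so after `r - 1` steps every `d_i` is an `(m-1)^r`-th root of unity. With
`d_1 = 1` this leaves at most `((m-1)^r)^{n-1}` choices of `d`.
-/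

open scoped BigOperators

theorem pow_pow_eq_of_exists_prod_eq {M Q : Type*} [CommMonoid M] [Finite Q] {p : ℕ} {c : Q → M}
    (H : ∀ S : Set Q, S.Nonempty → S ≠ Set.univ →
      ∃ q ∈ S, ∃ g : Fin p → Q, (∀ j, g j ∉ S) ∧ c q ^ p = ∏ j, c (g j))
    (q t : Q) : c q ^ p ^ (Nat.card Q - 1) = c t ^ p ^ (Nat.card Q - 1) := by
  set E : ℕ → Set Q := fun k => {q | c q ^ p ^ k = c t ^ p ^ k}
  have hmono : ∀ k, E k ⊆ E (k + 1) := fun k q (hq : c q ^ p ^ k = c t ^ p ^ k) => by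
    change c q ^ p ^ (k + 1) = c t ^ p ^ (k + 1)
    rw [pow_succ, pow_mul, pow_mul, hq]
  -- `H` applied to `(E k)ᶜ` produces an element of `E (k + 1) \ E k` as long as `E k ≠ univ`.
  have hgrow : ∀ k, min (k + 1) (Nat.card Q) ≤ (E k).ncard := by
    intro k
    induction k with
    | zero => exact (min_le_left _ _).trans ((Set.ncard_pos).mpr ⟨t, rfl⟩)
    | succ k ih =>
      by_cases huniv : E k = Set.univ
      · rw [← Set.ncard_univ, ← huniv]
        exact (min_le_right _ _).trans (Set.ncard_le_ncard (hmono k))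
      obtain ⟨q, hq, g, hg, hprod⟩ := H (E k)ᶜ (Set.nonempty_compl.mpr huniv)
        (fun h => (h ▸ Set.mem_univ t : t ∈ (E k)ᶜ) rfl)
      have hqE : q ∈ E (k + 1) := by
        change c q ^ p ^ (k + 1) = c t ^ p ^ (k + 1)
        have hg' : ∀ j, c (g j) ^ p ^ k = c t ^ p ^ k := fun j => not_not.mp (hg j)
        calc c q ^ p ^ (k + 1) = (c q ^ p) ^ p ^ k := by rw [pow_succ', pow_mul]
          _ = ∏ j, c (g j) ^ p ^ k := by rw [hprod, Finset.prod_pow]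
          _ = (c t ^ p ^ k) ^ p := by
            rw [Finset.prod_congr rfl fun j _ => hg' j, Finset.prod_const, Finset.card_univ,
              Fintype.card_fin]
          _ = c t ^ p ^ (k + 1) := by rw [← pow_mul, ← pow_succ]
      calc min (k + 1 + 1) (Nat.card Q) ≤ (E k).ncard + 1 := by omega
        _ = (insert q (E k)).ncard := (Set.ncard_insert_of_notMem hq).symm
        _ ≤ (E (k + 1)).ncard := Set.ncard_le_ncard (Set.insert_subset hqE (hmono k))
  have hE : E (Nat.card Q - 1) = Set.univ := by
    have hpos : 0 < Nat.card Q := Nat.card_pos_iff.mpr ⟨⟨t⟩, ‹_›⟩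
    refine Set.eq_of_subset_of_ncard_le (Set.subset_univ _) ?_
    have hlast := hgrow (Nat.card Q - 1)
    rw [Set.ncard_univ]
    omega
  exact Set.eq_univ_iff_forall.mp hE q

theorem ncard_le_pow_of_forall_pow_eq_one {ι K : Type*} [Fintype ι] [CommRing K] [IsDomain K]
    {N : ℕ} (hN : 0 < N) (i₀ : ι) {S : Set (ι → K)}
    (hS : ∀ d ∈ S, d i₀ = 1 ∧ ∀ i, d i ^ N = 1) :
    S.ncard ≤ N ^ (Fintype.card ι - 1) := by
  classical
  set roots := Function.update (fun _ => Polynomial.nthRootsFinset N (1 : K)) i₀ {1}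
  have hsub : S ⊆ Fintype.piFinset roots := by
    intro d hd
    simp only [Fintype.coe_piFinset, Set.mem_pi, Set.mem_univ, Finset.mem_coe, forall_const]
    intro i
    rcases eq_or_ne i i₀ with rfl | hi
    · simp [roots, (hS d hd).1]
    · simp [roots, hi, Polynomial.mem_nthRootsFinset hN, (hS d hd).2 i]
  have hroots : (Polynomial.nthRootsFinset N (1 : K)).card ≤ N := by
    rw [Polynomial.nthRootsFinset_def]
    exact (Multiset.toFinset_card_le _).trans (Polynomial.card_nthRoots _ _)
  calc S.ncard ≤ (Fintype.piFinset roots : Set (ι → K)).ncard :=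
        Set.ncard_le_ncard hsub (Finset.finite_toSet _)
    _ = ∏ i ∈ Finset.univ.erase i₀, (Polynomial.nthRootsFinset N (1 : K)).card := by
        rw [Set.ncard_coe_finset, Fintype.card_piFinset, ← Finset.mul_prod_erase Finset.univ
          (fun i => (roots i).card) (Finset.mem_univ i₀)]
        simp only [roots, Function.update_self, Finset.card_singleton, one_mul]
        exact Finset.prod_congr rfl fun i hi => by
          rw [Function.update_of_ne (Finset.ne_of_mem_erase hi)]
    _ ≤ N ^ (Fintype.card ι - 1) := by
        refine (Finset.prod_le_pow_card _ _ _ fun _ _ => hroots).trans_eq ?_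
        rw [Finset.card_erase_of_mem (Finset.mem_univ i₀), Finset.card_univ]

namespace PaperTensor

section DiagonalSimilarity

variable {ι : Type} {m : ℕ} {A : Tensor ι m} {d : ι → ℂ}

abbrev SolidComponents (A : Tensor ι m) : Type :=
  Quot (fun a b : ι => SolidArc A a b ∨ SolidArc A b a)

theorem prod_eq_pow_of_diagConj_eq {i : ι} {f : Fin (m - 1) → ι} (hdi : d i ≠ 0)
    (hd : A i f = diagConj d A i f) (hA : A i f ≠ 0) : ∏ j, d (f j) = d i ^ (m - 1) := by
  have h : (d i ^ (m - 1))⁻¹ * ∏ j, d (f j) = 1 := mul_left_cancel₀ hA <| by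
    rw [diagConj, inv_pow] at hd
    linear_combination -hd
  exact ((inv_mul_eq_one₀ (pow_ne_zero _ hdi)).mp h).symm

theorem pow_eq_pow_of_solidArc {a b : ι} (hda : d a ≠ 0)
    (hd : ∀ f, A a f = diagConj d A a f) (hab : SolidArc A a b) :
    d a ^ (m - 1) = d b ^ (m - 1) := by
  simpa using (prod_eq_pow_of_diagConj_eq hda (hd _) hab).symm

def componentPow (hd0 : ∀ i, d i ≠ 0) (hd : ∀ i f, A i f = diagConj d A i f) :
    SolidComponents A → ℂ :=
  Quot.lift (fun i => d i ^ (m - 1)) fun a b hab =>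
    hab.elim (pow_eq_pow_of_solidArc (hd0 a) (hd a)) fun h =>
      (pow_eq_pow_of_solidArc (hd0 b) (hd b) h).symm

theorem Irred.exists_ne_zero (hirr : Irred A) {S : Set ι} (hS : S.Nonempty)
    (hSu : S ≠ Set.univ) :
    ∃ i ∈ S, ∃ f : Fin (m - 1) → ι, (∀ j, f j ∉ S) ∧ A i f ≠ 0 := by
  by_contra! h
  exact hirr ⟨S, hS, hSu, h⟩

theorem exists_componentPow_pow_eq_prod (hirr : Irred A) (hd0 : ∀ i, d i ≠ 0)
    (hd : ∀ i f, A i f = diagConj d A i f) (S : Set (SolidComponents A)) (hS : S.Nonempty)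
    (hSu : S ≠ Set.univ) :
    ∃ q ∈ S, ∃ g : Fin (m - 1) → SolidComponents A, (∀ j, g j ∉ S) ∧
      componentPow hd0 hd q ^ (m - 1) = ∏ j, componentPow hd0 hd (g j) := by
  obtain ⟨i, hi, f, hf, hA⟩ := hirr.exists_ne_zero (S := Quot.mk _ ⁻¹' S)
    (hS.preimage Quot.mk_surjective)
    (fun h => hSu (Set.eq_univ_of_forall fun q => by
      obtain ⟨i, rfl⟩ := Quot.mk_surjective q
      exact h.superset (Set.mem_univ i)))
  refine ⟨Quot.mk _ i, hi, fun j => Quot.mk _ (f j), hf, ?_⟩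
  change (d i ^ (m - 1)) ^ (m - 1) = ∏ j, d (f j) ^ (m - 1)
  rw [← prod_eq_pow_of_diagConj_eq (hd0 i) (hd i f) hA, Finset.prod_pow]

theorem pow_pow_card_solidComponents_eq [Finite ι] (hirr : Irred A) (hd0 : ∀ i, d i ≠ 0)
    (hd : ∀ i f, A i f = diagConj d A i f) (i j : ι) :
    d i ^ (m - 1) ^ Nat.card (SolidComponents A) =
      d j ^ (m - 1) ^ Nat.card (SolidComponents A) := by
  have hcard : 0 < Nat.card (SolidComponents A) :=
    Nat.card_pos_iff.mpr ⟨⟨Quot.mk _ i⟩, inferInstance⟩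
  rw [← Nat.sub_add_cancel hcard, pow_succ', pow_mul, pow_mul]
  exact pow_pow_eq_of_exists_prod_eq (exists_componentPow_pow_eq_prod hirr hd0 hd)
    (Quot.mk _ i) (Quot.mk _ j)

end DiagonalSimilarity

theorem stmt14_general {n m r : ℕ} [NeZero n] (hm : 2 ≤ m) (A : Tensor (Fin n) m)
    (hirr : Irred A)
    (hr : Nat.card (Quot (fun a b : Fin n => SolidArc A a b ∨ SolidArc A b a)) = r) :
    (∀ d ∈ Dg0 A, d ^ ((m - 1) ^ r) = (1 : Fin n → ℂ)) ∧
    (Dg0 A).ncard ≤ (m - 1) ^ (r * (n - 1)) := by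
  have hpow : ∀ d ∈ Dg0 A, ∀ i, d i ^ (m - 1) ^ r = 1 := by
    rintro d ⟨hd0, hd1, hd⟩ i
    rw [← hr, pow_pow_card_solidComponents_eq hirr hd0 hd i 0, hd1, one_pow]
  refine ⟨fun d hd => funext (hpow d hd), ?_⟩
  calc (Dg0 A).ncard ≤ ((m - 1) ^ r) ^ (Fintype.card (Fin n) - 1) :=
        ncard_le_pow_of_forall_pow_eq_one (pow_pos (by omega) _) 0
          fun d hd => ⟨hd.2.1, hpow d hd⟩
    _ = (m - 1) ^ (r * (n - 1)) := by rw [Fintype.card_fin, ← pow_mul]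

/-- If `A` is nonnegative irreducible with `r` weakly connected components of its solid
graph, then every `D ∈ 𝔇^{(0)}(A)` satisfies `D^{(m-1)^r} = I`, and
`s(A) ≤ (m-1)^{r(n-1)}`. -/
theorem stmt14 {n m r : ℕ} [NeZero n] (hm : 2 ≤ m) (A : Tensor (Fin n) m)
    (hA : Nonneg A) (hirr : Irred A)
    (hr : Nat.card (Quot (fun a b : Fin n => SolidArc A a b ∨ SolidArc A b a)) = r) :
    (∀ d ∈ Dg0 A, d ^ ((m - 1) ^ r) = (1 : Fin n → ℂ)) ∧
    (Dg0 A).ncard ≤ (m - 1) ^ (r * (n - 1)) :=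
  stmt14_general hm A hirr hr

end PaperTensor
end
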